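/- arXiv:math/0212389 — 10 statements merged into one kernel-verified Lean document; each statement's English description precedes it below -/
import Mathlib

section
/- Let p, p', q, q' be integers with Δ := p·q' − p'·q > 0. Then the set of ordered pairs (η, η') of complex numbers of modulus 1 satisfying η^p·η'^q = 1, η^{p'}·η'^{q'} = 1, η ≠ η', η ≠ 1 and η' ≠ 1 is finite, and its cardinality equals Δ − gcd(p,p') − gcd(q,q') − gcd(p+q, p'+q') + 2. -/
private lemma real_pow_eq_one {x : ℝ} {n : ℕ} (hx : 0 ≤ x) (hn : n ≠ 0) (h : x ^ n = 1) :
    x = 1 := by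
  rcases lt_trichotomy x 1 with h1 | h1 | h1
  · have := pow_lt_one₀ hx h1 hn; linarith
  · exact h1
  · have := one_lt_pow₀ h1 hn; linarith

private lemma norm_one_of_pow {z : ℂ} {n : ℕ} (hn : n ≠ 0) (h : z ^ n = 1) : ‖z‖ = 1 := by
  apply real_pow_eq_one (norm_nonneg z) hn
  rw [← norm_pow, h, norm_one]

private lemma roots_ncard (n : ℕ) (hn : 0 < n) :
    {z : ℂ | z ^ n = 1}.Finite ∧ {z : ℂ | z ^ n = 1}.ncard = n := by
  have hset : {z : ℂ | z ^ n = 1} = ↑(Polynomial.nthRootsFinset n (1 : ℂ)) := by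
    ext z; simp [Polynomial.mem_nthRootsFinset hn (1 : ℂ)]
  rw [hset]
  refine ⟨(Polynomial.nthRootsFinset n (1 : ℂ)).finite_toSet, ?_⟩
  rw [Set.ncard_coe_finset]
  exact (Complex.isPrimitiveRoot_exp n hn.ne').card_nthRootsFinset

private lemma pow_gcd_iff {a b : ℤ} {z : ℂ} (hz : z ≠ 0) :
    (z ^ a = 1 ∧ z ^ b = 1) ↔ z ^ ((Int.gcd a b : ℤ)) = 1 := by
  constructor
  · rintro ⟨ha, hb⟩
    rw [Int.gcd_eq_gcd_ab, zpow_add₀ hz, zpow_mul, zpow_mul, ha, hb, one_zpow, one_zpow, one_mul]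
  · intro h
    obtain ⟨c, hc⟩ := Int.gcd_dvd_left (a := a) (b := b)
    obtain ⟨c', hc'⟩ := Int.gcd_dvd_right (a := a) (b := b)
    constructor
    · rw [hc, zpow_mul, h, one_zpow]
    · rw [hc', zpow_mul, h, one_zpow]

private lemma exists_fiber (p p' q q' : ℤ) (hd : p * q' - p' * q ≠ 0) {t : ℂ}
    (htn : ‖t‖ = 1) (htm : t ^ ((p * q' - p' * q) / (Int.gcd p p' : ℤ)) = 1) :
    ∃ η : ℂ, ‖η‖ = 1 ∧ η ^ p * t ^ q = 1 ∧ η ^ p' * t ^ q' = 1 := by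
  have hg : 0 < Int.gcd p p' := by
    rw [Int.gcd_pos_iff]
    by_contra h
    push_neg at h
    rw [h.1, h.2] at hd
    simp at hd
  set g : ℤ := (Int.gcd p p' : ℤ) with hg_def
  have hgz : g ≠ 0 := by
    simp only [hg_def, ne_eq, Int.natCast_eq_zero]
    omega
  have hgp : g ∣ p := Int.gcd_dvd_left p p'
  have hgp' : g ∣ p' := Int.gcd_dvd_right p p'
  set a := p / g with ha_def
  set a' := p' / g with ha'_def
  have hpa : g * a = p := Int.mul_ediv_cancel' hgp
  have hpa' : g * a' = p' := Int.mul_ediv_cancel' hgp'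
  set u := Int.gcdA p p' with hu_def
  set v := Int.gcdB p p' with hv_def
  have hbez : g = p * u + p' * v := Int.gcd_eq_gcd_ab p p'
  have huv : a * u + a' * v = 1 := by
    have h2 : g * (a * u + a' * v) = g * 1 := by
      rw [mul_one]
      linear_combination -hbez + u * hpa + v * hpa'
    exact mul_left_cancel₀ hgz h2
  have hgd : g ∣ (p * q' - p' * q) := dvd_sub (hgp.mul_right q') (hgp'.mul_right q)
  set m := (p * q' - p' * q) / g with hm_def
  have hmd : g * m = p * q' - p' * q := Int.mul_ediv_cancel' hgd
  have haq : a * q' - a' * q = m := by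
    apply mul_left_cancel₀ hgz
    rw [hmd]
    linear_combination q' * hpa - q * hpa'
  have ht0 : t ≠ 0 := by intro h; rw [h] at htn; simp at htn
  set w : ℂ := t ^ (-(u * q + v * q')) with hw_def
  have hw0 : w ≠ 0 := zpow_ne_zero _ ht0
  set τ : ℂ := w ^ ((Int.gcd p p' : ℂ)⁻¹) with hτ_def
  have hτg : τ ^ (Int.gcd p p') = w := by
    rw [hτ_def]
    exact_mod_cast Complex.cpow_nat_inv_pow w hg.ne'
  have hτgz : τ ^ g = w := by rw [hg_def, zpow_natCast, hτg]
  have hτ0 : τ ≠ 0 := by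
    intro h
    rw [h, zero_pow hg.ne'] at hτg
    exact hw0 hτg.symm
  have hkey : ∀ b : ℤ, t ^ (m * b) = 1 := by
    intro b
    rw [zpow_mul, htm, one_zpow]
  refine ⟨τ, ?_, ?_, ?_⟩
  · have h2 : ‖τ‖ ^ (Int.gcd p p') = 1 := by
      rw [← norm_pow, hτg, hw_def, norm_zpow, htn, one_zpow]
    exact real_pow_eq_one (norm_nonneg τ) hg.ne' h2
  · have h1 : τ ^ p = t ^ (-(u * q + v * q') * a) := by
      rw [← hpa, zpow_mul, hτgz, hw_def, ← zpow_mul]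
    rw [h1, ← zpow_add₀ ht0]
    have h2 : -(u * q + v * q') * a + q = m * (-v) := by
      linear_combination (-q) * huv - v * haq
    rw [h2, hkey]
  · have h1 : τ ^ p' = t ^ (-(u * q + v * q') * a') := by
      rw [← hpa', zpow_mul, hτgz, hw_def, ← zpow_mul]
    rw [h1, ← zpow_add₀ ht0]
    have h2 : -(u * q + v * q') * a' + q' = m * u := by
      linear_combination (-q') * huv + u * haq
    rw [h2, hkey]

private lemma S0_card (p p' q q' : ℤ) (hΔ : 0 < p * q' - p' * q) :
    ({x : ℂ × ℂ | ‖x.1‖ = 1 ∧ ‖x.2‖ = 1 ∧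
        x.1 ^ p * x.2 ^ q = 1 ∧ x.1 ^ p' * x.2 ^ q' = 1}).Finite ∧
    ({x : ℂ × ℂ | ‖x.1‖ = 1 ∧ ‖x.2‖ = 1 ∧
        x.1 ^ p * x.2 ^ q = 1 ∧ x.1 ^ p' * x.2 ^ q' = 1}).ncard
      = (p * q' - p' * q).toNat := by
  set S := {x : ℂ × ℂ | ‖x.1‖ = 1 ∧ ‖x.2‖ = 1 ∧
        x.1 ^ p * x.2 ^ q = 1 ∧ x.1 ^ p' * x.2 ^ q' = 1} with hS_def
  have hd : p * q' - p' * q ≠ 0 := hΔ.ne'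
  have hg : 0 < Int.gcd p p' := by
    rw [Int.gcd_pos_iff]
    by_contra h
    push_neg at h
    rw [h.1, h.2] at hd
    simp at hd
  set gN : ℕ := Int.gcd p p' with hgN_def
  have hgz : (gN : ℤ) ≠ 0 := by exact_mod_cast hg.ne'
  have hgp : (gN : ℤ) ∣ p := Int.gcd_dvd_left p p'
  have hgp' : (gN : ℤ) ∣ p' := Int.gcd_dvd_right p p'
  set a := p / (gN : ℤ) with ha_def
  set a' := p' / (gN : ℤ) with ha'_def
  have hpa : (gN : ℤ) * a = p := Int.mul_ediv_cancel' hgp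
  have hpa' : (gN : ℤ) * a' = p' := Int.mul_ediv_cancel' hgp'
  have hgd : (gN : ℤ) ∣ (p * q' - p' * q) := dvd_sub (hgp.mul_right q') (hgp'.mul_right q)
  set m := (p * q' - p' * q) / (gN : ℤ) with hm_def
  have hmd : (gN : ℤ) * m = p * q' - p' * q := Int.mul_ediv_cancel' hgd
  have haq : a * q' - a' * q = m := by
    apply mul_left_cancel₀ hgz
    rw [hmd]
    linear_combination q' * hpa - q * hpa'
  have hm0 : 0 < m := by
    rcases lt_trichotomy m 0 with h | h | h
    · nlinarith [hmd, Int.natCast_pos.mpr hg]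
    · rw [h, mul_zero] at hmd; omega
    · exact h
  set mN : ℕ := m.toNat with hmN_def
  have hmN : (mN : ℤ) = m := Int.toNat_of_nonneg hm0.le
  have hmN0 : 0 < mN := by omega
  -- choice function for fibers
  set s : ℂ → ℂ := fun t =>
    if h : ‖t‖ = 1 ∧ t ^ ((p * q' - p' * q) / (Int.gcd p p' : ℤ)) = 1 then
      (exists_fiber p p' q q' hd h.1 h.2).choose
    else 1 with hs_def
  have hs : ∀ t : ℂ, ‖t‖ = 1 → t ^ m = 1 →
      ‖s t‖ = 1 ∧ (s t) ^ p * t ^ q = 1 ∧ (s t) ^ p' * t ^ q' = 1 := by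
    intro t h1 h2
    have hcond : ‖t‖ = 1 ∧ t ^ ((p * q' - p' * q) / (Int.gcd p p' : ℤ)) = 1 := ⟨h1, h2⟩
    rw [hs_def]
    simp only [dif_pos hcond]
    exact (exists_fiber p p' q q' hd hcond.1 hcond.2).choose_spec
  -- facts about members of S
  have hmem : ∀ x : ℂ × ℂ, x ∈ S → x.1 ≠ 0 ∧ x.2 ≠ 0 ∧
      x.1 ^ p = x.2 ^ (-q) ∧ x.1 ^ p' = x.2 ^ (-q') := by
    rintro ⟨η, η'⟩ ⟨h1, h2, h3, h4⟩
    have hη : η ≠ 0 := by intro h; rw [h] at h1; simp at h1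
    have hη' : η' ≠ 0 := by intro h; rw [h] at h2; simp at h2
    exact ⟨hη, hη', by rw [zpow_neg]; exact eq_inv_of_mul_eq_one_left h3,
      by rw [zpow_neg]; exact eq_inv_of_mul_eq_one_left h4⟩
  have hsnd : ∀ x : ℂ × ℂ, x ∈ S → x.2 ^ m = 1 := by
    rintro ⟨η, η'⟩ hx
    obtain ⟨hη, hη', h3, h4⟩ := hmem _ hx
    have hq : η' ^ (-q) = η ^ p := h3.symm
    have hq' : η' ^ (-q') = η ^ p' := h4.symm
    calc η' ^ m = η' ^ (-q' * -a + -q * a') := by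
            rw [show m = -q' * -a + -q * a' by linear_combination -haq]
      _ = (η' ^ (-q')) ^ (-a) * (η' ^ (-q)) ^ a' := by
            rw [zpow_add₀ hη', zpow_mul, zpow_mul]
      _ = (η ^ p') ^ (-a) * (η ^ p) ^ a' := by rw [hq, hq']
      _ = η ^ (p' * -a + p * a') := by rw [← zpow_mul, ← zpow_mul, ← zpow_add₀ hη]
      _ = η ^ (0 : ℤ) := by
            rw [show p' * -a + p * a' = 0 by linear_combination -a' * hpa + a * hpa']
      _ = 1 := zpow_zero _
  -- target sets
  set T := {z : ℂ | z ^ mN = 1} with hT_def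
  set U := {z : ℂ | z ^ gN = 1} with hU_def
  set f : ℂ × ℂ → ℂ × ℂ := fun x => (x.2, x.1 * (s x.2)⁻¹) with hf_def
  have hsprops : ∀ x : ℂ × ℂ, x ∈ S →
      ‖s x.2‖ = 1 ∧ (s x.2) ^ p * x.2 ^ q = 1 ∧ (s x.2) ^ p' * x.2 ^ q' = 1 := by
    intro x hx
    exact hs x.2 hx.2.1 (hsnd x hx)
  have hs0 : ∀ x : ℂ × ℂ, x ∈ S → s x.2 ≠ 0 := by
    intro x hx
    intro h
    have := (hsprops x hx).1
    rw [h] at this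
    simp at this
  have himg : f '' S = T ×ˢ U := by
    ext ⟨t, z⟩
    constructor
    · rintro ⟨x, hx, hfx⟩
      obtain ⟨hη, hη', h3, h4⟩ := hmem x hx
      obtain ⟨hn1, hp1, hp2⟩ := hsprops x hx
      have hsx0 : s x.2 ≠ 0 := hs0 x hx
      have ht : x.2 = t := congrArg Prod.fst hfx
      have hz : x.1 * (s x.2)⁻¹ = z := congrArg Prod.snd hfx
      constructor
      · rw [hT_def, Set.mem_setOf_eq, ← ht, ← zpow_natCast, hmN]
        exact hsnd x hx
      · rw [hU_def, Set.mem_setOf_eq, ← hz]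
        have hz0 : x.1 * (s x.2)⁻¹ ≠ 0 := mul_ne_zero hη (inv_ne_zero hsx0)
        have hzp : (x.1 * (s x.2)⁻¹) ^ p = 1 := by
          rw [mul_zpow, inv_zpow, h3,
            show (s x.2) ^ p = x.2 ^ (-q) by
              rw [zpow_neg]; exact eq_inv_of_mul_eq_one_left hp1]
          exact mul_inv_cancel₀ (zpow_ne_zero _ hη')
        have hzp' : (x.1 * (s x.2)⁻¹) ^ p' = 1 := by
          rw [mul_zpow, inv_zpow, h4,
            show (s x.2) ^ p' = x.2 ^ (-q') by
              rw [zpow_neg]; exact eq_inv_of_mul_eq_one_left hp2]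
          exact mul_inv_cancel₀ (zpow_ne_zero _ hη')
        have := (pow_gcd_iff hz0).mp ⟨hzp, hzp'⟩
        rw [← zpow_natCast]
        exact this
    · rintro ⟨ht, hz⟩
      rw [hT_def, Set.mem_setOf_eq] at ht
      rw [hU_def, Set.mem_setOf_eq] at hz
      have htn : ‖t‖ = 1 := norm_one_of_pow hmN0.ne' ht
      have hzn : ‖z‖ = 1 := norm_one_of_pow hg.ne' hz
      have htm : t ^ m = 1 := by rw [← hmN, zpow_natCast]; exact ht
      have hzg : z ^ ((gN : ℕ) : ℤ) = 1 := by rw [zpow_natCast]; exact hz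
      obtain ⟨hn1, hp1, hp2⟩ := hs t htn htm
      have hst0 : s t ≠ 0 := by intro h; rw [h] at hn1; simp at hn1
      have hz0 : z ≠ 0 := by intro h; rw [h] at hzn; simp at hzn
      have hzp : z ^ p = 1 := by
        obtain ⟨c, hc⟩ := hgp
        rw [hc, zpow_mul, hzg, one_zpow]
      have hzp' : z ^ p' = 1 := by
        obtain ⟨c, hc⟩ := hgp'
        rw [hc, zpow_mul, hzg, one_zpow]
      refine ⟨(z * s t, t), ⟨?_, ?_, ?_, ?_⟩, ?_⟩
      · show ‖z * s t‖ = 1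
        rw [norm_mul, hzn, hn1, one_mul]
      · exact htn
      · show (z * s t) ^ p * t ^ q = 1
        rw [mul_zpow, hzp, one_mul]
        exact hp1
      · show (z * s t) ^ p' * t ^ q' = 1
        rw [mul_zpow, hzp', one_mul]
        exact hp2
      · show (t, z * s t * (s t)⁻¹) = (t, z)
        rw [mul_assoc, mul_inv_cancel₀ hst0, mul_one]
  have hinj : Set.InjOn f S := by
    intro x hx y hy hxy
    have h2 : x.2 = y.2 := congrArg Prod.fst hxy
    have h1 : x.1 * (s x.2)⁻¹ = y.1 * (s y.2)⁻¹ := congrArg Prod.snd hxy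
    rw [h2] at h1
    have : x.1 = y.1 := mul_right_cancel₀ (inv_ne_zero (hs0 y hy)) h1
    exact Prod.ext this h2
  obtain ⟨hTfin, hTcard⟩ := roots_ncard mN hmN0
  obtain ⟨hUfin, hUcard⟩ := roots_ncard gN hg
  have hprodfin : (T ×ˢ U).Finite := hTfin.prod hUfin
  have hSfin : S.Finite := by
    apply Set.Finite.of_finite_image _ hinj
    rw [himg]
    exact hprodfin
  refine ⟨hSfin, ?_⟩
  have hcard1 : S.ncard = (T ×ˢ U).ncard := by
    rw [← himg, Set.ncard_image_of_injOn hinj]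
  have hcard2 : (T ×ˢ U).ncard = T.ncard * U.ncard := by
    rw [← Nat.card_coe_set_eq, ← Nat.card_coe_set_eq, ← Nat.card_coe_set_eq,
      Nat.card_congr (Equiv.Set.prod T U), Nat.card_prod]
  have hfinal : ((mN * gN : ℕ) : ℤ) = ((p * q' - p' * q).toNat : ℤ) := by
    push_cast
    rw [hmN, Int.toNat_of_nonneg hΔ.le]
    linarith [hmd]
  rw [hcard1, hcard2, hTcard, hUcard]
  exact_mod_cast hfinal

theorem double_point_count (p p' q q' : ℤ) (hΔ : 0 < p * q' - p' * q) :
    ({x : ℂ × ℂ | ‖x.1‖ = 1 ∧ ‖x.2‖ = 1 ∧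
        x.1 ^ p * x.2 ^ q = 1 ∧ x.1 ^ p' * x.2 ^ q' = 1 ∧
        x.1 ≠ x.2 ∧ x.1 ≠ 1 ∧ x.2 ≠ 1}).Finite ∧
    (({x : ℂ × ℂ | ‖x.1‖ = 1 ∧ ‖x.2‖ = 1 ∧
        x.1 ^ p * x.2 ^ q = 1 ∧ x.1 ^ p' * x.2 ^ q' = 1 ∧
        x.1 ≠ x.2 ∧ x.1 ≠ 1 ∧ x.2 ≠ 1}).ncard : ℤ) =
      (p * q' - p' * q) - (Int.gcd p p' : ℤ) - (Int.gcd q q' : ℤ)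
        - (Int.gcd (p + q) (p' + q') : ℤ) + 2 := by
  have hd : p * q' - p' * q ≠ 0 := hΔ.ne'
  set S := {x : ℂ × ℂ | ‖x.1‖ = 1 ∧ ‖x.2‖ = 1 ∧
      x.1 ^ p * x.2 ^ q = 1 ∧ x.1 ^ p' * x.2 ^ q' = 1} with hS_def
  set V := {x : ℂ × ℂ | ‖x.1‖ = 1 ∧ ‖x.2‖ = 1 ∧
      x.1 ^ p * x.2 ^ q = 1 ∧ x.1 ^ p' * x.2 ^ q' = 1 ∧
      x.1 ≠ x.2 ∧ x.1 ≠ 1 ∧ x.2 ≠ 1} with hV_def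
  have hSfin : S.Finite := (S0_card p p' q q' hΔ).1
  have hScard : S.ncard = (p * q' - p' * q).toNat := (S0_card p p' q q' hΔ).2
  have hg1 : 0 < Int.gcd p p' := by
    rw [Int.gcd_pos_iff]
    by_contra h
    push_neg at h
    apply hd
    rw [h.1, h.2]; ring
  have hg2 : 0 < Int.gcd q q' := by
    rw [Int.gcd_pos_iff]
    by_contra h
    push_neg at h
    apply hd
    rw [h.1, h.2]; ring
  have hg3 : 0 < Int.gcd (p + q) (p' + q') := by
    rw [Int.gcd_pos_iff]
    by_contra h
    push_neg at h
    apply hd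
    linear_combination q' * h.1 - q * h.2
  set B₁ := S ∩ {x : ℂ × ℂ | x.1 = x.2} with hB₁_def
  set B₂ := S ∩ {x : ℂ × ℂ | x.1 = 1} with hB₂_def
  set B₃ := S ∩ {x : ℂ × ℂ | x.2 = 1} with hB₃_def
  -- descriptions of the three degenerate subsets
  have hB₁ : B₁ = (fun z : ℂ => (z, z)) '' {z : ℂ | z ^ (Int.gcd (p + q) (p' + q')) = 1} := by
    ext x
    constructor
    · rintro ⟨⟨h1, h2, h3, h4⟩, hdiag⟩
      simp only [Set.mem_setOf_eq] at hdiag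
      rw [← hdiag] at h3 h4
      have hx0 : x.1 ≠ 0 := by intro h; rw [h] at h1; simp at h1
      rw [← zpow_add₀ hx0] at h3 h4
      have := (pow_gcd_iff hx0).mp ⟨h3, h4⟩
      exact ⟨x.1, by rw [Set.mem_setOf_eq, ← zpow_natCast]; exact this,
        Prod.ext rfl hdiag⟩
    · rintro ⟨z, hz, rfl⟩
      rw [Set.mem_setOf_eq] at hz
      have hzn : ‖z‖ = 1 := norm_one_of_pow hg3.ne' hz
      have hz0 : z ≠ 0 := by intro h; rw [h] at hzn; simp at hzn
      have hzz : z ^ ((Int.gcd (p + q) (p' + q') : ℕ) : ℤ) = 1 := by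
        rw [zpow_natCast]; exact hz
      obtain ⟨hzp, hzq⟩ := (pow_gcd_iff hz0).mpr hzz
      refine ⟨⟨hzn, hzn, ?_, ?_⟩, rfl⟩
      · show z ^ p * z ^ q = 1
        rw [← zpow_add₀ hz0]; exact hzp
      · show z ^ p' * z ^ q' = 1
        rw [← zpow_add₀ hz0]; exact hzq
  have hB₂ : B₂ = (fun z : ℂ => ((1 : ℂ), z)) '' {z : ℂ | z ^ (Int.gcd q q') = 1} := by
    ext x
    constructor
    · rintro ⟨⟨h1, h2, h3, h4⟩, hone⟩
      simp only [Set.mem_setOf_eq] at hone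
      rw [hone, one_zpow, one_mul] at h3 h4
      have hx0 : x.2 ≠ 0 := by intro h; rw [h] at h2; simp at h2
      have := (pow_gcd_iff hx0).mp ⟨h3, h4⟩
      exact ⟨x.2, by rw [Set.mem_setOf_eq, ← zpow_natCast]; exact this,
        Prod.ext hone.symm rfl⟩
    · rintro ⟨z, hz, rfl⟩
      rw [Set.mem_setOf_eq] at hz
      have hzn : ‖z‖ = 1 := norm_one_of_pow hg2.ne' hz
      have hz0 : z ≠ 0 := by intro h; rw [h] at hzn; simp at hzn
      have hzz : z ^ ((Int.gcd q q' : ℕ) : ℤ) = 1 := by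
        rw [zpow_natCast]; exact hz
      obtain ⟨hzp, hzq⟩ := (pow_gcd_iff hz0).mpr hzz
      refine ⟨⟨norm_one, hzn, ?_, ?_⟩, rfl⟩
      · show (1 : ℂ) ^ p * z ^ q = 1
        rw [one_zpow, one_mul]; exact hzp
      · show (1 : ℂ) ^ p' * z ^ q' = 1
        rw [one_zpow, one_mul]; exact hzq
  have hB₃ : B₃ = (fun z : ℂ => (z, (1 : ℂ))) '' {z : ℂ | z ^ (Int.gcd p p') = 1} := by
    ext x
    constructor
    · rintro ⟨⟨h1, h2, h3, h4⟩, hone⟩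
      simp only [Set.mem_setOf_eq] at hone
      rw [hone, one_zpow, mul_one] at h3 h4
      have hx0 : x.1 ≠ 0 := by intro h; rw [h] at h1; simp at h1
      have := (pow_gcd_iff hx0).mp ⟨h3, h4⟩
      exact ⟨x.1, by rw [Set.mem_setOf_eq, ← zpow_natCast]; exact this,
        Prod.ext rfl hone.symm⟩
    · rintro ⟨z, hz, rfl⟩
      rw [Set.mem_setOf_eq] at hz
      have hzn : ‖z‖ = 1 := norm_one_of_pow hg1.ne' hz
      have hz0 : z ≠ 0 := by intro h; rw [h] at hzn; simp at hzn
      have hzz : z ^ ((Int.gcd p p' : ℕ) : ℤ) = 1 := by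
        rw [zpow_natCast]; exact hz
      obtain ⟨hzp, hzq⟩ := (pow_gcd_iff hz0).mpr hzz
      refine ⟨⟨hzn, norm_one, ?_, ?_⟩, rfl⟩
      · show z ^ p * (1 : ℂ) ^ q = 1
        rw [one_zpow, mul_one]; exact hzp
      · show z ^ p' * (1 : ℂ) ^ q' = 1
        rw [one_zpow, mul_one]; exact hzq
  -- cardinalities of the degenerate subsets
  have hinj1 : Function.Injective (fun z : ℂ => (z, z)) :=
    fun a b h => congrArg Prod.fst h
  have hinj2 : Function.Injective (fun z : ℂ => ((1 : ℂ), z)) :=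
    fun a b h => congrArg Prod.snd h
  have hinj3 : Function.Injective (fun z : ℂ => (z, (1 : ℂ))) :=
    fun a b h => congrArg Prod.fst h
  have hB₁card : B₁.ncard = Int.gcd (p + q) (p' + q') := by
    rw [hB₁, Set.ncard_image_of_injective _ hinj1, (roots_ncard _ hg3).2]
  have hB₂card : B₂.ncard = Int.gcd q q' := by
    rw [hB₂, Set.ncard_image_of_injective _ hinj2, (roots_ncard _ hg2).2]
  have hB₃card : B₃.ncard = Int.gcd p p' := by
    rw [hB₃, Set.ncard_image_of_injective _ hinj3, (roots_ncard _ hg1).2]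
  have hB₁fin : B₁.Finite := hSfin.subset Set.inter_subset_left
  have hB₂fin : B₂.Finite := hSfin.subset Set.inter_subset_left
  have hB₃fin : B₃.Finite := hSfin.subset Set.inter_subset_left
  -- the common point (1,1)
  set c : ℂ × ℂ := (1, 1) with hc_def
  have hcS : c ∈ S := by
    refine ⟨norm_one, norm_one, ?_, ?_⟩ <;>
      · show (1 : ℂ) ^ _ * (1 : ℂ) ^ _ = 1
        rw [one_zpow, one_zpow, one_mul]
  have hc₁ : c ∈ B₁ := ⟨hcS, rfl⟩
  have hc₂ : c ∈ B₂ := ⟨hcS, rfl⟩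
  have hc₃ : c ∈ B₃ := ⟨hcS, rfl⟩
  have hB₁₂ : B₁ ∩ B₂ ⊆ {c} := by
    rintro x ⟨⟨_, h12⟩, ⟨_, h1⟩⟩
    simp only [Set.mem_setOf_eq] at h12 h1
    have : x = c := Prod.ext h1 (h12.symm.trans h1)
    exact this ▸ rfl
  have hB₁₃ : B₁ ∩ B₃ ⊆ {c} := by
    rintro x ⟨⟨_, h12⟩, ⟨_, h2⟩⟩
    simp only [Set.mem_setOf_eq] at h12 h2
    have : x = c := Prod.ext (h12.trans h2) h2
    exact this ▸ rfl
  have hB₂₃ : B₂ ∩ B₃ ⊆ {c} := by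
    rintro x ⟨⟨_, h1⟩, ⟨_, h2⟩⟩
    simp only [Set.mem_setOf_eq] at h1 h2
    have : x = c := Prod.ext h1 h2
    exact this ▸ rfl
  set W := B₁ ∪ B₂ ∪ B₃ with hW_def
  have hWS : W ⊆ S := by
    intro x hx
    rcases hx with (hx | hx) | hx <;> exact hx.1
  have hWfin : W.Finite := hSfin.subset hWS
  -- V = S \ W
  have hVW : V = S \ W := by
    ext x
    constructor
    · rintro ⟨h1, h2, h3, h4, h5, h6, h7⟩
      refine ⟨⟨h1, h2, h3, h4⟩, ?_⟩
      rintro ((hx | hx) | hx)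
      · exact h5 hx.2
      · exact h6 hx.2
      · exact h7 hx.2
    · rintro ⟨⟨h1, h2, h3, h4⟩, hw⟩
      refine ⟨h1, h2, h3, h4, ?_, ?_, ?_⟩
      · intro heq; exact hw (Or.inl (Or.inl ⟨⟨h1, h2, h3, h4⟩, heq⟩))
      · intro heq; exact hw (Or.inl (Or.inr ⟨⟨h1, h2, h3, h4⟩, heq⟩))
      · intro heq; exact hw (Or.inr ⟨⟨h1, h2, h3, h4⟩, heq⟩)
  -- decompose W
  have hWdec : W = insert c ((B₁ \ {c}) ∪ ((B₂ \ {c}) ∪ (B₃ \ {c}))) := by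
    ext x
    by_cases hx : x = c
    · subst hx
      constructor
      · intro _; exact Set.mem_insert _ _
      · intro _; exact Or.inl (Or.inl hc₁)
    · have hxc : x ∉ ({c} : Set (ℂ × ℂ)) := fun h => hx h
      constructor
      · rintro ((h | h) | h)
        · exact Set.mem_insert_of_mem _ (Or.inl ⟨h, hxc⟩)
        · exact Set.mem_insert_of_mem _ (Or.inr (Or.inl ⟨h, hxc⟩))
        · exact Set.mem_insert_of_mem _ (Or.inr (Or.inr ⟨h, hxc⟩))
      · rintro (rfl | (⟨h, _⟩ | (⟨h, _⟩ | ⟨h, _⟩)))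
        · exact Or.inl (Or.inl hc₁)
        · exact Or.inl (Or.inl h)
        · exact Or.inl (Or.inr h)
        · exact Or.inr h
  have hd₂₃ : Disjoint (B₂ \ {c}) (B₃ \ {c}) := by
    rw [Set.disjoint_left]
    rintro x ⟨hx2, hxc⟩ ⟨hx3, _⟩
    exact hxc (hB₂₃ ⟨hx2, hx3⟩)
  have hd₁₂₃ : Disjoint (B₁ \ {c}) ((B₂ \ {c}) ∪ (B₃ \ {c})) := by
    rw [Set.disjoint_union_right]
    constructor
    · rw [Set.disjoint_left]
      rintro x ⟨hx1, hxc⟩ ⟨hx2, _⟩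
      exact hxc (hB₁₂ ⟨hx1, hx2⟩)
    · rw [Set.disjoint_left]
      rintro x ⟨hx1, hxc⟩ ⟨hx3, _⟩
      exact hxc (hB₁₃ ⟨hx1, hx3⟩)
  have hcnot : c ∉ (B₁ \ {c}) ∪ ((B₂ \ {c}) ∪ (B₃ \ {c})) := by
    simp
  have hWcard : W.ncard =
      1 + ((B₁.ncard - 1) + ((B₂.ncard - 1) + (B₃.ncard - 1))) := by
    rw [hWdec, Set.ncard_insert_of_notMem hcnot
      (((hB₁fin.diff).union ((hB₂fin.diff).union (hB₃fin.diff))))]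
    rw [Set.ncard_union_eq hd₁₂₃ (hB₁fin.diff) ((hB₂fin.diff).union (hB₃fin.diff))]
    rw [Set.ncard_union_eq hd₂₃ (hB₂fin.diff) (hB₃fin.diff)]
    rw [Set.ncard_diff_singleton_of_mem hc₁,
      Set.ncard_diff_singleton_of_mem hc₂,
      Set.ncard_diff_singleton_of_mem hc₃]
    omega
  -- final computation
  have hVfin : V.Finite := by
    rw [hVW]; exact hSfin.diff
  refine ⟨hVfin, ?_⟩
  have hVcard : V.ncard = S.ncard - W.ncard := by
    rw [hVW]; exact Set.ncard_diff hWS hWfin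
  have hWle : W.ncard ≤ S.ncard := Set.ncard_le_ncard hWS hSfin
  have hB1pos : 1 ≤ B₁.ncard := by rw [hB₁card]; exact hg3
  have hB2pos : 1 ≤ B₂.ncard := by rw [hB₂card]; exact hg2
  have hB3pos : 1 ≤ B₃.ncard := by rw [hB₃card]; exact hg1
  set D : ℤ := p * q' - p' * q with hD_def
  omega
end

section
/- Let p, p', q, q' be integers with Δ := p·q' − p'·q > 0. Suppose that either Δ = 1, or Δ = 2, or there is a pair (m,m') among (p,p'), (q,q'), (−p−q, −p'−q') such that Δ divides both m and m'. Then there is no ordered pair (η, η') of complex numbers of modulus 1 with η^p·η'^q = 1, η^{p'}·η'^{q'} = 1, η ≠ η', η ≠ 1 and η' ≠ 1. -/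
/-!
The two relations say that `(η, η')` lies in the kernel of the endomorphism of the torus
`(x, y) ↦ (x ^ p * y ^ q, x ^ p' * y ^ q')`. Multiplying by the adjugate matrix, both `η` and `η'`
are `Δ`-th roots of unity. For `Δ = 1` this forces `η = 1`, and for `Δ = 2` it forces
`η = η' = -1`. If `Δ` divides a column `(p, p')`, then `η ^ p = η ^ p' = 1`, so `η'` is killed by
the coprime exponents `q, q'`; the column `(q, q')` is symmetric, and the column
`(-p - q, -p' - q')` reduces to the first one after the change of variables
`(η, η') ↦ (η, η' / η)`, which preserves `Δ`.
-/

lemma isCoprime_of_det_dvd_left {R : Type*} [CommRing R] [NoZeroDivisors R] {p p' q q' : R}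
    (hΔ : p * q' - p' * q ≠ 0) (hp : p * q' - p' * q ∣ p) (hp' : p * q' - p' * q ∣ p') :
    IsCoprime q q' := by
  obtain ⟨a, ha⟩ := hp
  obtain ⟨a', ha'⟩ := hp'
  refine ⟨-a', a, mul_left_cancel₀ hΔ ?_⟩
  linear_combination (-q') * ha + q * ha'

section CommGroup

variable {G : Type*} [CommGroup G] {x y : G} {p p' q q' : ℤ}

lemma eq_one_of_zpow_eq_one_of_isCoprime (hpq : IsCoprime p q) (hp : x ^ p = 1)
    (hq : x ^ q = 1) : x = 1 := by
  obtain ⟨u, v, huv⟩ := hpq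
  calc x = x ^ (u * p + v * q) := by rw [huv, zpow_one]
    _ = 1 := by rw [zpow_add, mul_comm u, mul_comm v, zpow_mul, zpow_mul, hp, hq]; simp

lemma zpow_det_eq_one_left (h₁ : x ^ p * y ^ q = 1) (h₂ : x ^ p' * y ^ q' = 1) :
    x ^ (p * q' - p' * q) = 1 := by
  calc x ^ (p * q' - p' * q) = (x ^ p * y ^ q) ^ q' / (x ^ p' * y ^ q') ^ q := by
        rw [mul_zpow, mul_zpow, ← zpow_mul, ← zpow_mul, ← zpow_mul, ← zpow_mul, mul_comm q q',
          mul_div_mul_right_eq_div, zpow_sub, div_eq_mul_inv]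
    _ = 1 := by rw [h₁, h₂]; simp

lemma zpow_det_eq_one_right (h₁ : x ^ p * y ^ q = 1) (h₂ : x ^ p' * y ^ q' = 1) :
    y ^ (p * q' - p' * q) = 1 := by
  calc y ^ (p * q' - p' * q) = (x ^ p' * y ^ q') ^ p / (x ^ p * y ^ q) ^ p' := by
        rw [mul_zpow, mul_zpow, ← zpow_mul, ← zpow_mul, ← zpow_mul, ← zpow_mul, mul_comm p p',
          mul_div_mul_left_eq_div, zpow_sub, div_eq_mul_inv, mul_comm q', mul_comm q]
    _ = 1 := by rw [h₁, h₂]; simp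

lemma eq_one_right_of_det_dvd_left (hΔ : p * q' - p' * q ≠ 0) (h₁ : x ^ p * y ^ q = 1)
    (h₂ : x ^ p' * y ^ q' = 1) (hp : p * q' - p' * q ∣ p) (hp' : p * q' - p' * q ∣ p') :
    y = 1 := by
  have hx : (orderOf x : ℤ) ∣ p * q' - p' * q :=
    orderOf_dvd_iff_zpow_eq_one.2 (zpow_det_eq_one_left h₁ h₂)
  have hxp : x ^ p = 1 := orderOf_dvd_iff_zpow_eq_one.1 (hx.trans hp)
  have hxp' : x ^ p' = 1 := orderOf_dvd_iff_zpow_eq_one.1 (hx.trans hp')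
  refine eq_one_of_zpow_eq_one_of_isCoprime (isCoprime_of_det_dvd_left hΔ hp hp') ?_ ?_
  · simpa [hxp] using h₁
  · simpa [hxp'] using h₂

lemma eq_one_left_of_det_dvd_right (hΔ : p * q' - p' * q ≠ 0) (h₁ : x ^ p * y ^ q = 1)
    (h₂ : x ^ p' * y ^ q' = 1) (hq : p * q' - p' * q ∣ q) (hq' : p * q' - p' * q ∣ q') :
    x = 1 := by
  have hdet : q * p' - q' * p = -(p * q' - p' * q) := by ring
  have key := eq_one_right_of_det_dvd_left (x := y) (y := x) (p := q) (p' := q') (q := p) (q' := p')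
  rw [hdet, neg_ne_zero, neg_dvd, neg_dvd] at key
  exact key hΔ (by rwa [mul_comm]) (by rwa [mul_comm]) hq hq'

lemma eq_of_det_dvd_add (hΔ : p * q' - p' * q ≠ 0) (h₁ : x ^ p * y ^ q = 1)
    (h₂ : x ^ p' * y ^ q' = 1) (hpq : p * q' - p' * q ∣ p + q)
    (hpq' : p * q' - p' * q ∣ p' + q') : x = y := by
  have hdet : (p + q) * q' - (p' + q') * q = p * q' - p' * q := by ring
  have key := eq_one_right_of_det_dvd_left (x := x) (y := y / x) (p := p + q) (p' := p' + q')
    (q := q) (q' := q')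
  rw [hdet] at key
  refine (div_eq_one.1 (key hΔ ?_ ?_ hpq hpq')).symm
  · rwa [zpow_add, div_zpow, mul_assoc, mul_div_cancel]
  · rwa [zpow_add, div_zpow, mul_assoc, mul_div_cancel]

end CommGroup

lemma Circle.eq_neg_one_of_sq_eq_one {x : Circle} (hx : x ^ 2 = 1) (hx₁ : x ≠ 1) : x = -1 := by
  apply Circle.ext
  have hx' : (x : ℂ) ^ 2 = 1 := by exact_mod_cast congrArg ((↑) : Circle → ℂ) hx
  push_cast
  exact (sq_eq_one_iff.1 hx').resolve_left (mt Circle.coe_eq_one.1 hx₁)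

theorem double_point_vanishing (p p' q q' : ℤ) (hΔ : 0 < p * q' - p' * q)
    (h : p * q' - p' * q = 1 ∨ p * q' - p' * q = 2 ∨
      ∃ m m' : ℤ, ((m, m') = (p, p') ∨ (m, m') = (q, q') ∨ (m, m') = (-p - q, -p' - q')) ∧
        (p * q' - p' * q) ∣ m ∧ (p * q' - p' * q) ∣ m') :
    ¬ ∃ η η' : ℂ, ‖η‖ = 1 ∧ ‖η'‖ = 1 ∧
      η ^ p * η' ^ q = 1 ∧ η ^ p' * η' ^ q' = 1 ∧ η ≠ η' ∧ η ≠ 1 ∧ η' ≠ 1 := by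
  rintro ⟨η, η', hη, hη', h₁, h₂, hne, hη₁, hη'₁⟩
  obtain ⟨x, rfl⟩ : ∃ x : Circle, (x : ℂ) = η := ⟨⟨η, mem_sphere_zero_iff_norm.2 hη⟩, rfl⟩
  obtain ⟨y, rfl⟩ : ∃ y : Circle, (y : ℂ) = η' := ⟨⟨η', mem_sphere_zero_iff_norm.2 hη'⟩, rfl⟩
  simp only [← Circle.coe_zpow, ← Circle.coe_mul, Circle.coe_eq_one, ne_eq, Circle.coe_inj]
    at h₁ h₂ hne hη₁ hη'₁
  rcases h with hΔ₁ | hΔ₂ | ⟨m, m', hm, hm₁, hm₂⟩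
  · exact hη₁ (by simpa [hΔ₁] using zpow_det_eq_one_left h₁ h₂)
  · have hx : x ^ 2 = 1 := by simpa [hΔ₂] using zpow_det_eq_one_left h₁ h₂
    have hy : y ^ 2 = 1 := by simpa [hΔ₂] using zpow_det_eq_one_right h₁ h₂
    exact hne ((Circle.eq_neg_one_of_sq_eq_one hx hη₁).trans
      (Circle.eq_neg_one_of_sq_eq_one hy hη'₁).symm)
  · rcases hm with hm | hm | hm <;> obtain ⟨rfl, rfl⟩ := Prod.mk.inj hm
    · exact hη'₁ (eq_one_right_of_det_dvd_left hΔ.ne' h₁ h₂ hm₁ hm₂)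
    · exact hη₁ (eq_one_left_of_det_dvd_right hΔ.ne' h₁ h₂ hm₁ hm₂)
    · rw [← neg_add', dvd_neg] at hm₁ hm₂
      exact hne (eq_of_det_dvd_add hΔ.ne' h₁ h₂ hm₁ hm₂)
end

section
/- Let p, p', q, q' be integers such that Δ := p·q' − p'·q is a prime number with Δ ≥ 3, and suppose that no pair among (p,p'), (q,q'), (−p−q, −p'−q') has both of its members divisible by Δ. Then the number of ordered pairs (η, η') of complex numbers of modulus 1 with η^p·η'^q = 1, η^{p'}·η'^{q'} = 1, η ≠ η', η ≠ 1 and η' ≠ 1 is exactly Δ − 1. -/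
set_option maxHeartbeats 1000000

private lemma ker_helper {F : Type*} [Field F] {P Q P' Q' α β I J : F}
    (hne : P ≠ 0 ∨ Q ≠ 0 ∨ P' ≠ 0 ∨ Q' ≠ 0)
    (hα : α ≠ 0) (hβ : β ≠ 0)
    (h1 : P * α + Q * β = 0) (h2 : P' * α + Q' * β = 0)
    (h3 : P * I + Q * J = 0) (h4 : P' * I + Q' * J = 0) :
    ∃ t : F, I = t * α ∧ J = t * β := by
  rcases hne with hP | hQ | hP | hQ
  · have key : I * β = J * α := by
      have h5 : P * (I * β - J * α) = 0 := by linear_combination β * h3 - J * h1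
      have h6 := (mul_eq_zero.mp h5).resolve_left hP
      linear_combination h6
    exact ⟨J / β, by field_simp; linear_combination key, by field_simp⟩
  · have key : J * α = I * β := by
      have h5 : Q * (J * α - I * β) = 0 := by linear_combination α * h3 - I * h1
      have h6 := (mul_eq_zero.mp h5).resolve_left hQ
      linear_combination h6
    exact ⟨I / α, by field_simp, by field_simp; linear_combination key⟩
  · have key : I * β = J * α := by
      have h5 : P' * (I * β - J * α) = 0 := by linear_combination β * h4 - J * h2
      have h6 := (mul_eq_zero.mp h5).resolve_left hP
      linear_combination h6
    exact ⟨J / β, by field_simp; linear_combination key, by field_simp⟩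
  · have key : J * α = I * β := by
      have h5 : Q' * (J * α - I * β) = 0 := by linear_combination α * h4 - I * h2
      have h6 := (mul_eq_zero.mp h5).resolve_left hQ
      linear_combination h6
    exact ⟨I / α, by field_simp, by field_simp; linear_combination key⟩

theorem double_point_count_prime (p p' q q' : ℤ)
    (hprime : Prime (p * q' - p' * q)) (h3 : 3 ≤ p * q' - p' * q)
    (h : ∀ m m' : ℤ, ((m, m') = (p, p') ∨ (m, m') = (q, q') ∨ (m, m') = (-p - q, -p' - q')) →
      ¬((p * q' - p' * q) ∣ m ∧ (p * q' - p' * q) ∣ m')) :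
    (({x : ℂ × ℂ | ‖x.1‖ = 1 ∧ ‖x.2‖ = 1 ∧
        x.1 ^ p * x.2 ^ q = 1 ∧ x.1 ^ p' * x.2 ^ q' = 1 ∧
        x.1 ≠ x.2 ∧ x.1 ≠ 1 ∧ x.2 ≠ 1}).ncard : ℤ) = (p * q' - p' * q) - 1 := by
  have hΔpos : (0:ℤ) < p * q' - p' * q := by linarith
  set n : ℕ := (p * q' - p' * q).toNat with hn
  have hnΔ : (n : ℤ) = p * q' - p' * q := Int.toNat_of_nonneg hΔpos.le
  have hn3 : 3 ≤ n := by omega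
  have hn0 : n ≠ 0 := by omega
  have hnprime : Nat.Prime n := by
    have hh := Int.prime_iff_natAbs_prime.mp hprime
    rwa [show (p * q' - p' * q).natAbs = n by omega] at hh
  haveI : Fact (Nat.Prime n) := ⟨hnprime⟩
  haveI : NeZero n := ⟨hn0⟩
  clear_value n
  -- divisibility bridge
  have hdvd : ∀ m : ℤ, (m : ZMod n) = 0 ↔ (p * q' - p' * q) ∣ m := by
    intro m; rw [ZMod.intCast_zmod_eq_zero_iff_dvd, hnΔ]
  have hcol1 : ¬((p : ZMod n) = 0 ∧ (p' : ZMod n) = 0) := by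
    rintro ⟨h1, h2⟩
    exact h p p' (Or.inl rfl) ⟨(hdvd p).mp h1, (hdvd p').mp h2⟩
  have hcol2 : ¬((q : ZMod n) = 0 ∧ (q' : ZMod n) = 0) := by
    rintro ⟨h1, h2⟩
    exact h q q' (Or.inr (Or.inl rfl)) ⟨(hdvd q).mp h1, (hdvd q').mp h2⟩
  have hsum : ¬((p : ZMod n) + (q : ZMod n) = 0 ∧ (p' : ZMod n) + (q' : ZMod n) = 0) := by
    rintro ⟨h1, h2⟩
    refine h (-p - q) (-p' - q') (Or.inr (Or.inr rfl)) ⟨(hdvd _).mp ?_, (hdvd _).mp ?_⟩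
    · push_cast; linear_combination -h1
    · push_cast; linear_combination -h2
  have hdet : (p : ZMod n) * (q' : ZMod n) - (p' : ZMod n) * (q : ZMod n) = 0 := by
    have hh : ((p * q' - p' * q : ℤ) : ZMod n) = 0 := (hdvd _).mpr dvd_rfl
    push_cast at hh; linear_combination hh
  -- kernel vector
  obtain ⟨α, β, hk1, hk2, hne0⟩ :
      ∃ α β : ZMod n, (p : ZMod n) * α + (q : ZMod n) * β = 0 ∧
        (p' : ZMod n) * α + (q' : ZMod n) * β = 0 ∧ ¬(α = 0 ∧ β = 0) := by
    by_cases hc : (q : ZMod n) = 0 ∧ (p : ZMod n) = 0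
    · refine ⟨(q' : ZMod n), -(p' : ZMod n), by linear_combination hdet, by ring, ?_⟩
      rintro ⟨h1, h2⟩
      exact hcol1 ⟨hc.2, by simpa using h2⟩
    · refine ⟨(q : ZMod n), -(p : ZMod n), by ring, by linear_combination -hdet, ?_⟩
      rintro ⟨h1, h2⟩
      exact hc ⟨h1, by simpa using h2⟩
  have hα : α ≠ 0 := by
    intro h0
    have hβ0 : β ≠ 0 := fun hb => hne0 ⟨h0, hb⟩
    apply hcol2
    rw [h0, mul_zero, zero_add] at hk1 hk2
    exact ⟨(mul_eq_zero.mp hk1).resolve_right hβ0, (mul_eq_zero.mp hk2).resolve_right hβ0⟩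
  have hβ : β ≠ 0 := by
    intro h0
    apply hcol1
    rw [h0, mul_zero, add_zero] at hk1 hk2
    exact ⟨(mul_eq_zero.mp hk1).resolve_right hα, (mul_eq_zero.mp hk2).resolve_right hα⟩
  have hαβ : α ≠ β := by
    intro hab
    subst hab
    apply hsum
    constructor
    · have hh : ((p : ZMod n) + (q : ZMod n)) * α = 0 := by linear_combination hk1
      exact (mul_eq_zero.mp hh).resolve_right hα
    · have hh : ((p' : ZMod n) + (q' : ZMod n)) * α = 0 := by linear_combination hk2
      exact (mul_eq_zero.mp hh).resolve_right hα
  -- primitive root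
  set ζ : ℂ := Complex.exp (2 * Real.pi * Complex.I / n) with hζdef
  have hζ : IsPrimitiveRoot ζ n := Complex.isPrimitiveRoot_exp n hn0
  have hζne : ζ ≠ 0 := by rw [hζdef]; exact Complex.exp_ne_zero _
  clear_value ζ
  have hone : ∀ m : ℤ, ζ ^ m = 1 ↔ (m : ZMod n) = 0 := by
    intro m; rw [hζ.zpow_eq_one_iff_dvd, ← ZMod.intCast_zmod_eq_zero_iff_dvd]
  have hprod : ∀ (a b : ℕ) (m m' : ℤ),
      ((ζ ^ a) ^ m * (ζ ^ b) ^ m' = 1 ↔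
        (m : ZMod n) * (a : ZMod n) + (m' : ZMod n) * (b : ZMod n) = 0) := by
    intro a b m m'
    rw [← zpow_natCast ζ a, ← zpow_natCast ζ b, ← zpow_mul, ← zpow_mul,
      ← zpow_add₀ hζne, hone]
    push_cast
    constructor <;> intro hh <;> linear_combination hh
  have hnorm : ∀ k : ℕ, ‖ζ ^ k‖ = 1 := by
    intro k
    have hh : (ζ ^ k) ^ n = 1 := by
      rw [← pow_mul, mul_comm, pow_mul, hζ.pow_eq_one, one_pow]
    exact Complex.norm_eq_one_of_pow_eq_one hh hn0
  have hsone : ∀ s : ZMod n, ζ ^ s.val = 1 ↔ s = 0 := by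
    intro s
    rw [hζ.pow_eq_one_iff_dvd]
    constructor
    · intro hd
      exact (ZMod.val_eq_zero s).mp (Nat.eq_zero_of_dvd_of_lt hd (ZMod.val_lt s))
    · intro h0; simp [h0, ZMod.val_zero]
  have hvalinj : ∀ s s' : ZMod n, ζ ^ s.val = ζ ^ s'.val → s = s' := by
    intro s s' hss
    have h1 : s.val = s'.val := hζ.pow_inj (ZMod.val_lt _) (ZMod.val_lt _) hss
    have h2 := congrArg (fun k : ℕ => (k : ZMod n)) h1
    simpa [ZMod.natCast_val, ZMod.cast_id] using h2
  have hcastval : ∀ s : ZMod n, ((s.val : ℕ) : ZMod n) = s := by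
    intro s; simp [ZMod.natCast_val, ZMod.cast_id]
  -- members are n-th roots of unity
  have hmem_pow : ∀ x y : ℂ, x ≠ 0 → y ≠ 0 → x ^ p * y ^ q = 1 → x ^ p' * y ^ q' = 1 →
      x ^ n = 1 ∧ y ^ n = 1 := by
    intro x y hx hy e1 e2
    set u : ℂˣ := Units.mk0 x hx with hu
    set v : ℂˣ := Units.mk0 y hy with hv
    have e1' : u ^ p * v ^ q = 1 := by
      apply Units.ext
      simpa [Units.val_zpow_eq_zpow_val, hu, hv] using e1
    have e2' : u ^ p' * v ^ q' = 1 := by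
      apply Units.ext
      simpa [Units.val_zpow_eq_zpow_val, hu, hv] using e2
    have hu1 : u ^ (p * q' - p' * q) = 1 := by
      have hcomb : (u ^ p * v ^ q) ^ q' * (u ^ p' * v ^ q') ^ (-q) = 1 := by
        rw [e1', e2', one_zpow, one_zpow, one_mul]
      have expand : (u ^ p * v ^ q) ^ q' * (u ^ p' * v ^ q') ^ (-q)
          = u ^ (p * q' + p' * (-q)) * v ^ (q * q' + q' * (-q)) := by
        rw [mul_zpow, mul_zpow, ← zpow_mul, ← zpow_mul, ← zpow_mul, ← zpow_mul,
          zpow_add, zpow_add, mul_mul_mul_comm]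
      rw [expand] at hcomb
      rw [show q * q' + q' * (-q) = 0 by ring, zpow_zero, mul_one,
        show p * q' + p' * (-q) = p * q' - p' * q by ring] at hcomb
      exact hcomb
    have hv1 : v ^ (p * q' - p' * q) = 1 := by
      have hcomb : (u ^ p * v ^ q) ^ (-p') * (u ^ p' * v ^ q') ^ p = 1 := by
        rw [e1', e2', one_zpow, one_zpow, one_mul]
      have expand : (u ^ p * v ^ q) ^ (-p') * (u ^ p' * v ^ q') ^ p
          = u ^ (p * (-p') + p' * p) * v ^ (q * (-p') + q' * p) := by
        rw [mul_zpow, mul_zpow, ← zpow_mul, ← zpow_mul, ← zpow_mul, ← zpow_mul,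
          zpow_add, zpow_add, mul_mul_mul_comm]
      rw [expand] at hcomb
      rw [show p * (-p') + p' * p = 0 by ring, zpow_zero, one_mul,
        show q * (-p') + q' * p = p * q' - p' * q by ring] at hcomb
      exact hcomb
    constructor
    · have hh := congrArg Units.val hu1
      rw [Units.val_zpow_eq_zpow_val, ← hnΔ, zpow_natCast] at hh
      exact hh
    · have hh := congrArg Units.val hv1
      rw [Units.val_zpow_eq_zpow_val, ← hnΔ, zpow_natCast] at hh
      exact hh
  set g : ZMod n → ℂ × ℂ := fun t => (ζ ^ (α * t).val, ζ ^ (β * t).val) with hg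
  have hginj : Function.Injective g := by
    intro t s hts
    have h1 : α * t = α * s := hvalinj _ _ (congrArg Prod.fst hts)
    exact mul_left_cancel₀ hα h1
  have hSeq : {x : ℂ × ℂ | ‖x.1‖ = 1 ∧ ‖x.2‖ = 1 ∧
        x.1 ^ p * x.2 ^ q = 1 ∧ x.1 ^ p' * x.2 ^ q' = 1 ∧
        x.1 ≠ x.2 ∧ x.1 ≠ 1 ∧ x.2 ≠ 1} = g '' {t : ZMod n | t ≠ 0} := by
    ext x
    simp only [Set.mem_setOf_eq, Set.mem_image]
    constructor
    · rintro ⟨hx1, hx2, he1, he2, hne12, hne1, hne2⟩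
      have hx10 : x.1 ≠ 0 := by intro h0; rw [h0] at hx1; simp at hx1
      have hx20 : x.2 ≠ 0 := by intro h0; rw [h0] at hx2; simp at hx2
      obtain ⟨hp1, hp2⟩ := hmem_pow x.1 x.2 hx10 hx20 he1 he2
      obtain ⟨i, hi, hxi⟩ := hζ.eq_pow_of_pow_eq_one hp1
      obtain ⟨j, hj, hxj⟩ := hζ.eq_pow_of_pow_eq_one hp2
      rw [← hxi, ← hxj] at he1 he2
      rw [hprod] at he1 he2
      obtain ⟨t, hI, hJ⟩ := ker_helper (by tauto) hα hβ hk1 hk2 he1 he2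
      have ht0 : t ≠ 0 := by
        intro h0
        rw [h0, zero_mul] at hI
        apply hne1
        have hi0 : i = 0 := by
          have hval := ZMod.val_natCast (n := n) i
          rw [hI, ZMod.val_zero, Nat.mod_eq_of_lt hi] at hval
          exact hval.symm
        rw [← hxi, hi0, pow_zero]
      refine ⟨t, ht0, ?_⟩
      have hv1 : (α * t).val = i := by
        rw [show α * t = (i : ZMod n) by rw [hI]; ring, ZMod.val_natCast, Nat.mod_eq_of_lt hi]
      have hv2 : (β * t).val = j := by
        rw [show β * t = (j : ZMod n) by rw [hJ]; ring, ZMod.val_natCast, Nat.mod_eq_of_lt hj]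
      have : g t = (ζ ^ i, ζ ^ j) := by rw [hg]; simp only [hv1, hv2]
      rw [this, hxi, hxj]
    · rintro ⟨t, ht0, rfl⟩
      have hcα : (((α * t).val : ℕ) : ZMod n) = α * t := hcastval _
      have hcβ : (((β * t).val : ℕ) : ZMod n) = β * t := hcastval _
      refine ⟨hnorm _, hnorm _, ?_, ?_, ?_, ?_, ?_⟩
      · rw [hg]; simp only; rw [hprod, hcα, hcβ]; linear_combination t * hk1
      · rw [hg]; simp only; rw [hprod, hcα, hcβ]; linear_combination t * hk2
      · intro heq
        have h1 : α * t = β * t := hvalinj _ _ heq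
        exact hαβ (mul_right_cancel₀ ht0 h1)
      · intro heq
        have h1 : α * t = 0 := (hsone _).mp heq
        exact ht0 ((mul_eq_zero.mp h1).resolve_left hα)
      · intro heq
        have h1 : β * t = 0 := (hsone _).mp heq
        exact ht0 ((mul_eq_zero.mp h1).resolve_left hβ)
  rw [hSeq, Set.ncard_image_of_injective _ hginj]
  have hset : {t : ZMod n | t ≠ 0} = ↑((Finset.univ : Finset (ZMod n)).erase 0) := by
    ext t; simp
  rw [hset, Set.ncard_coe_finset, Finset.card_erase_of_mem (Finset.mem_univ 0),
    Finset.card_univ, ZMod.card, Nat.cast_sub (by omega), Nat.cast_one, hnΔ]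
end

section
/- Suppose ((p,p'),(q,q')) is an ordered pair of pairs of integers satisfying the Proposition 5.1 constraints, and set k := p+q and k' := p'+q'; assume in addition that 2·k'^2 > 3·k^2. Then there is exactly one pair (m,m') ∈ {(p,p'),(q,q')} with the following two properties: 2·m'^2 > 3·m^2, and the associated ordered pair of pairs — namely ((q,q'),(−k,−k')) in case (m,m') = (p,p'), respectively ((−k,−k'),(p,p')) in case (m,m') = (q,q') — also satisfies the Proposition 5.1 constraints. -/
/-- The constraints of Proposition 5.1 on an ordered pair of pairs of integers
`((p,p'),(q,q'))`: (a) `p·q' − q·p' > 0`; (b) `q' − p' > 0` unless `p'` and `q'`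
are both nonzero and of the same sign; (c) for each `(m,m')` among `(p,p')` and
`(q,q')`: if `m < 0` then `2·m'^2 > 3·m^2`, and if `2·m'^2 < 3·m^2` then `m > 0`. -/
def Prop51Constraints (p p' q q' : ℤ) : Prop :=
  0 < p * q' - q * p' ∧
  (0 < p' * q' ∨ 0 < q' - p') ∧
  ((p < 0 → 3 * p ^ 2 < 2 * p' ^ 2) ∧ (2 * p' ^ 2 < 3 * p ^ 2 → 0 < p)) ∧
  ((q < 0 → 3 * q ^ 2 < 2 * q' ^ 2) ∧ (2 * q' ^ 2 < 3 * q ^ 2 → 0 < q))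

/-!
Write `k = p + q`, `k' = p' + q'` and `u = -k'`. Both new pairs have the determinant
`p q' - q p'` of the old one, and `(-k,-k')` satisfies (c) because it is steep, so only
condition (b) is at stake. The sign of `k' ≠ 0` decides: if `k' < 0` then (b) holds for
`(q', u)`, and `(p,p')` is steep, for otherwise it lies in the sector `{m ≥ 0, 2m'^2 ≤ 3m^2}`
and `k`, a steep vector in the lower half-plane, would lie counterclockwise of it
(`det(p,k) = det(p,q) > 0`), which comparing `|det|` with the cone inequalities forbids.
The case `k' > 0` is the mirror image, with `(u, p')` and `(q,q')`. Uniqueness holds because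
(b) never holds along all three edges of the cycle `p', q', u`, whose sum is zero.
-/

def Steep (m m' : ℤ) : Prop := 3 * m ^ 2 < 2 * m' ^ 2

/-- Condition (b) of Proposition 5.1 on the second coordinates. -/
def SameSignOrLt (s t : ℤ) : Prop := 0 < s * t ∨ 0 < t - s

/-- Condition (c) of Proposition 5.1 on one vector. -/
def AvoidsLeftCone (m m' : ℤ) : Prop :=
  (m < 0 → 3 * m ^ 2 < 2 * m' ^ 2) ∧ (2 * m' ^ 2 < 3 * m ^ 2 → 0 < m)

lemma Steep.snd_ne_zero {m m' : ℤ} (h : Steep m m') : m' ≠ 0 := by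
  rintro rfl
  unfold Steep at h
  nlinarith [sq_nonneg m]

lemma steep_neg_neg {m m' : ℤ} : Steep (-m) (-m') ↔ Steep m m' := by
  simp only [Steep, neg_sq]

lemma AvoidsLeftCone.of_steep {m m' : ℤ} (h : Steep m m') : AvoidsLeftCone m m' :=
  ⟨fun _ => h, fun h' => (lt_asymm h h').elim⟩

lemma AvoidsLeftCone.nonneg_of_not_steep {m m' : ℤ} (h : AvoidsLeftCone m m')
    (hm : ¬Steep m m') : 0 ≤ m :=
  not_lt.1 fun hneg => hm (h.1 hneg)

lemma Steep.sq_mul_le {p s q t : ℤ} (hv : Steep p s) (hw : ¬Steep q t) :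
    (p * t) ^ 2 ≤ (q * s) ^ 2 := by
  unfold Steep at hv hw
  nlinarith [mul_le_mul_of_nonneg_right hv.le (sq_nonneg t),
    mul_le_mul_of_nonneg_right (not_lt.1 hw) (sq_nonneg s)]

lemma Steep.of_det_pos {p s q t : ℤ} (hv : Steep p s) (hs : 0 ≤ s) (hw : AvoidsLeftCone q t)
    (hdet : 0 < p * t - q * s) : Steep q t := by
  by_contra hflat
  have hqs : 0 ≤ q * s := mul_nonneg (hw.nonneg_of_not_steep hflat) hs
  have := pow_lt_pow_left₀ (show q * s < p * t by linarith) hqs two_ne_zero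
  linarith [hv.sq_mul_le hflat]

lemma Steep.of_det_neg {p s q t : ℤ} (hv : Steep p s) (hs : s ≤ 0) (hw : AvoidsLeftCone q t)
    (hdet : p * t - q * s < 0) : Steep q t := by
  by_contra hflat
  have hqs : 0 ≤ -(q * s) := neg_nonneg.2 (mul_nonpos_of_nonneg_of_nonpos
    (hw.nonneg_of_not_steep hflat) hs)
  have := pow_lt_pow_left₀ (show -(q * s) < -(p * t) by linarith) hqs two_ne_zero
  simp only [neg_sq] at this
  linarith [hv.sq_mul_le hflat]

lemma sameSignOrLt_of_pos {t u : ℤ} (hu : 0 < u) : SameSignOrLt t u := by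
  rcases lt_or_ge 0 t with ht | ht
  · exact Or.inl (mul_pos ht hu)
  · exact Or.inr (by linarith)

lemma sameSignOrLt_of_neg {u s : ℤ} (hu : u < 0) : SameSignOrLt u s := by
  rcases lt_or_ge s 0 with hs | hs
  · exact Or.inl (mul_pos_of_neg_of_neg hu hs)
  · exact Or.inr (by linarith)

lemma not_sameSignOrLt_cycle {s t u : ℤ} (h : s + t + u = 0) :
    ¬(SameSignOrLt s t ∧ SameSignOrLt t u ∧ SameSignOrLt u s) := by
  obtain rfl : u = -(s + t) := by linarith
  rintro ⟨h₁ | h₁, h₂ | h₂, h₃ | h₃⟩ <;> nlinarith [sq_nonneg s, sq_nonneg t, sq_nonneg (s + t)]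

lemma Prop51Constraints.rotate {p p' q q' : ℤ} (hdet : 0 < p * q' - q * p')
    (hq : AvoidsLeftCone q q') (hk : Steep (p + q) (p' + q'))
    (hb : SameSignOrLt q' (-(p' + q'))) :
    Prop51Constraints q q' (-(p + q)) (-(p' + q')) :=
  ⟨by linarith, hb, hq, AvoidsLeftCone.of_steep (steep_neg_neg.2 hk)⟩

lemma Prop51Constraints.rotate_inv {p p' q q' : ℤ} (hdet : 0 < p * q' - q * p')
    (hp : AvoidsLeftCone p p') (hk : Steep (p + q) (p' + q'))
    (hb : SameSignOrLt (-(p' + q')) p') :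
    Prop51Constraints (-(p + q)) (-(p' + q')) p p' :=
  ⟨by linarith, hb, AvoidsLeftCone.of_steep (steep_neg_neg.2 hk), hp⟩

lemma existsUnique_of_or_of_not_and {α : Type*} {a b : α} (hab : a ≠ b) {P : α → Prop}
    {A B : Prop} (h : (P a ∧ A) ∨ (P b ∧ B)) (hAB : ¬(A ∧ B)) :
    ∃! x, (x = a ∨ x = b) ∧ P x ∧ (x = a → A) ∧ (x = b → B) := by
  rcases h with ⟨hPa, hA⟩ | ⟨hPb, hB⟩
  · refine ⟨a, ⟨Or.inl rfl, hPa, fun _ => hA, fun h => absurd h hab⟩, ?_⟩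
    rintro x ⟨rfl | rfl, -, -, hB⟩
    · rfl
    · exact absurd ⟨hA, hB rfl⟩ hAB
  · refine ⟨b, ⟨Or.inr rfl, hPb, fun h => absurd h.symm hab, fun _ => hB⟩, ?_⟩
    rintro x ⟨rfl | rfl, -, hA, -⟩
    · exact absurd ⟨hA rfl, hB⟩ hAB
    · rfl

theorem lemma_6_7 (p p' q q' : ℤ) (h : Prop51Constraints p p' q q')
    (hk : 3 * (p + q) ^ 2 < 2 * (p' + q') ^ 2) :
    ∃! mm' : ℤ × ℤ, (mm' = (p, p') ∨ mm' = (q, q')) ∧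
      3 * mm'.1 ^ 2 < 2 * mm'.2 ^ 2 ∧
      (mm' = (p, p') → Prop51Constraints q q' (-(p + q)) (-(p' + q'))) ∧
      (mm' = (q, q') → Prop51Constraints (-(p + q)) (-(p' + q')) p p') := by
  obtain ⟨hdet, hb, hp, hq⟩ : 0 < p * q' - q * p' ∧ SameSignOrLt p' q' ∧
      AvoidsLeftCone p p' ∧ AvoidsLeftCone q q' := h
  have hk : Steep (p + q) (p' + q') := hk
  have hne : (p, p') ≠ (q, q') := by
    rintro ⟨⟩
    simp at hdet
  refine existsUnique_of_or_of_not_and (P := fun x => Steep x.1 x.2) hne ?_ ?_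
  · rcases hk.snd_ne_zero.lt_or_gt with hk' | hk'
    · exact Or.inl ⟨hk.of_det_neg hk'.le hp (by linarith),
        Prop51Constraints.rotate hdet hq hk (sameSignOrLt_of_pos (by linarith))⟩
    · exact Or.inr ⟨hk.of_det_pos hk'.le hq (by linarith),
        Prop51Constraints.rotate_inv hdet hp hk (sameSignOrLt_of_neg (by linarith))⟩
  · rintro ⟨hA, hB⟩
    exact not_sameSignOrLt_cycle (by ring) ⟨hb, hA.2.1, hB.2.1⟩
end

section
/- Let (p₁,p₁'), (p₂,p₂'), (p₃,p₃') be three pairs of integers. Call a permutation τ of {1,2,3} admissible if, writing ((p,p'),(q,q'),(k,k')) for the triple reordered by τ, one has p+q+k = 0, p'+q'+k' = 0, 2·k'^2 > 3·k^2, and the ordered pair ((p,p'),(q,q')) satisfies the Proposition 5.1 constraints. If at least one permutation of {1,2,3} is admissible, then exactly two of the six permutations are admissible. -/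
/-- A permutation `τ` of `{1,2,3}` is admissible for the triple of integer pairs `P` if,
writing `((p,p'),(q,q'),(k,k'))` for the triple reordered by `τ`, one has
`p+q+k = 0`, `p'+q'+k' = 0`, `2·k'^2 > 3·k^2`, and `((p,p'),(q,q'))` satisfies the
Proposition 5.1 constraints. -/
def AdmissiblePerm (P : Fin 3 → ℤ × ℤ) (τ : Equiv.Perm (Fin 3)) : Prop :=
  (P (τ 0)).1 + (P (τ 1)).1 + (P (τ 2)).1 = 0 ∧
  (P (τ 0)).2 + (P (τ 1)).2 + (P (τ 2)).2 = 0 ∧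
  3 * (P (τ 2)).1 ^ 2 < 2 * (P (τ 2)).2 ^ 2 ∧
  Prop51Constraints (P (τ 0)).1 (P (τ 0)).2 (P (τ 1)).1 (P (τ 1)).2

/-!
Call `v = (m, m')` inside the cone when `3m² < 2m'²`; as `√6` is irrational, every nonzero
integer vector lies strictly inside or strictly outside. When `a + b + c = 0` the determinant
`cross a b` is invariant under cyclic rotation of `(a, b, c)` and changes sign under a
transposition, so only the three rotations of an admissible ordering `(a, b, c)` can be
admissible. If `a` and `b` are inside, everything reduces to the sign condition
`a' < 0 ∨ 0 < b'`, which fails for exactly one cyclic pair of three second coordinates summing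
to zero. If `a` is outside, convexity of the upper half of the cone and of the right half of its
complement forces `b` inside and `(c, a, b)` admissible, while `(b, c, a)` is not since `a` is
outside; `b` outside is the mirror image under `(m, m') ↦ (m, -m')`, which reverses orientation.
-/

theorem eq_zero_of_three_mul_sq_eq_two_mul_sq {m n : ℤ} (h : 3 * m ^ 2 = 2 * n ^ 2) : n = 0 := by
  by_contra hn
  have h6 : (6 : ℚ) = 3 * m / n * (3 * m / n) := by
    field_simp
    exact_mod_cast (by linear_combination -3 * h : (6 : ℤ) * n ^ 2 = 3 ^ 2 * m ^ 2)
  exact absurd ⟨_, h6⟩ (by norm_num : ¬IsSquare (6 : ℚ))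

theorem xor_neg_or_pos_of_add_eq_zero {x y z : ℤ} (hs : x + y + z = 0) (hz : z ≠ 0)
    (h : x < 0 ∨ 0 < y) : Xor (y < 0 ∨ 0 < z) (z < 0 ∨ 0 < x) := by
  unfold Xor; omega

theorem mul_pos_or_sub_pos_iff {x y : ℤ} : (0 < x * y ∨ 0 < y - x) ↔ (x < 0 ∨ 0 < y) := by
  rw [mul_pos_iff]; omega

section
variable {R : Type*} [CommRing R] [LinearOrder R] [IsStrictOrderedRing R]

theorem add_sq_lt_add_sq {α β x y x' y' : R} (hα : 0 ≤ α) (hy : 0 < y) (hy' : 0 < y')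
    (h : α * x ^ 2 < β * y ^ 2) (h' : α * x' ^ 2 < β * y' ^ 2) :
    α * (x + x') ^ 2 < β * (y + y') ^ 2 := by
  have hβ : 0 < β :=
    pos_of_mul_pos_left ((by positivity : 0 ≤ α * x ^ 2).trans_lt h) (by positivity)
  have hsq : (α * x * x') ^ 2 < (β * y * y') ^ 2 :=
    calc (α * x * x') ^ 2 = (α * x ^ 2) * (α * x' ^ 2) := by ring
      _ < (β * y ^ 2) * (β * y' ^ 2) := mul_lt_mul'' h h' (by positivity) (by positivity)
      _ = (β * y * y') ^ 2 := by ring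
  have hcross := (le_abs_self _).trans_lt (abs_lt_of_sq_lt_sq hsq (by positivity))
  linear_combination h + h' + 2 * hcross

end

namespace Prop51

def InCone (v : ℤ × ℤ) : Prop := 3 * v.1 ^ 2 < 2 * v.2 ^ 2

def OutsideCone (v : ℤ × ℤ) : Prop := 2 * v.2 ^ 2 < 3 * v.1 ^ 2

def cross (u v : ℤ × ℤ) : ℤ := u.1 * v.2 - v.1 * u.2

def reflect (v : ℤ × ℤ) : ℤ × ℤ := (v.1, -v.2)

variable {u v w : ℤ × ℤ}

@[simp] theorem reflect_fst (v : ℤ × ℤ) : (reflect v).1 = v.1 := rfl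

@[simp] theorem reflect_snd (v : ℤ × ℤ) : (reflect v).2 = -v.2 := rfl

theorem InCone.not_outsideCone (hv : InCone v) : ¬OutsideCone v := hv.asymm

theorem InCone.snd_ne_zero (hv : InCone v) : v.2 ≠ 0 := by
  intro h
  unfold InCone at hv
  rw [h] at hv
  nlinarith [sq_nonneg v.1]

theorem inCone_or_outsideCone (hv : v ≠ 0) : InCone v ∨ OutsideCone v := by
  rcases lt_trichotomy (3 * v.1 ^ 2) (2 * v.2 ^ 2) with h | h | h
  · exact .inl h
  · have h2 := eq_zero_of_three_mul_sq_eq_two_mul_sq h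
    rw [h2] at h
    exact absurd (Prod.ext (pow_eq_zero_iff two_ne_zero |>.mp (by linarith)) h2) hv
  · exact .inr h

@[simp] theorem inCone_neg : InCone (-v) ↔ InCone v := by simp [InCone]

@[simp] theorem outsideCone_neg : OutsideCone (-v) ↔ OutsideCone v := by simp [OutsideCone]

@[simp] theorem inCone_reflect : InCone (reflect v) ↔ InCone v := by simp [InCone, reflect]

@[simp] theorem outsideCone_reflect : OutsideCone (reflect v) ↔ OutsideCone v := by
  simp [OutsideCone, reflect]

theorem InCone.add (hu : InCone u) (hv : InCone v) (hu₂ : 0 < u.2) (hv₂ : 0 < v.2) :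
    InCone (u + v) :=
  add_sq_lt_add_sq (by norm_num) hu₂ hv₂ hu hv

theorem OutsideCone.add (hu : OutsideCone u) (hv : OutsideCone v) (hu₁ : 0 < u.1)
    (hv₁ : 0 < v.1) : OutsideCone (u + v) :=
  add_sq_lt_add_sq (by norm_num) hu₁ hv₁ hu hv

theorem cross_swap (u v : ℤ × ℤ) : cross v u = -cross u v := by unfold cross; ring

theorem cross_rotate (h : u + v + w = 0) : cross v w = cross u v := by
  obtain rfl : w = -(u + v) := eq_neg_of_add_eq_zero_right h
  simp only [cross, Prod.fst_neg, Prod.snd_neg, Prod.fst_add, Prod.snd_add]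
  ring

theorem cross_reflect (u v : ℤ × ℤ) : cross (reflect v) (reflect u) = cross u v := by
  unfold cross reflect; ring

theorem cross_neg_of_outsideCone_of_inCone (hu : OutsideCone u) (hu₁ : 0 < u.1) (hu₂ : u.2 ≤ 0)
    (hv : InCone v) (hv₂ : v.2 < 0) : cross u v < 0 := by
  unfold cross
  rcases le_or_gt v.1 0 with hv₁ | hv₁
  · nlinarith [mul_nonneg_of_nonpos_of_nonpos hv₁ hu₂]
  · have hsq : (v.1 * u.2) ^ 2 < (u.1 * v.2) ^ 2 := by
      unfold OutsideCone at hu; unfold InCone at hv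
      nlinarith [mul_lt_mul'' hu hv (by positivity) (by positivity)]
    have habs := sq_lt_sq.mp hsq
    rw [abs_of_nonpos (mul_nonpos_of_nonneg_of_nonpos hv₁.le hu₂),
      abs_of_neg (mul_neg_of_pos_of_neg hu₁ hv₂)] at habs
    linarith

theorem ne_zero_of_cross_pos (h : 0 < cross u v) : u ≠ 0 ∧ v ≠ 0 := by
  constructor <;> rintro rfl <;> simp [cross] at h

theorem inCone_of_fst_neg (hv : v ≠ 0) (h : OutsideCone v → 0 < v.1) (hv₁ : v.1 < 0) :
    InCone v :=
  (inCone_or_outsideCone hv).resolve_right fun ho => (h ho).not_gt hv₁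

/-- `InCone c ∧ Prop51Constraints a.1 a.2 b.1 b.2` in reduced form: the sign condition
`0 < p'q' ∨ 0 < q' - p'` is `p' < 0 ∨ 0 < q'`, and as no nonzero vector lies on the boundary of
the cone, the condition `p < 0 → InCone (p, p')` is implied by `OutsideCone (p, p') → 0 < p`. -/
def Admissible (a b c : ℤ × ℤ) : Prop :=
  InCone c ∧ 0 < cross a b ∧ (a.2 < 0 ∨ 0 < b.2) ∧ (OutsideCone a → 0 < a.1) ∧
    (OutsideCone b → 0 < b.1)

theorem inCone_and_prop51Constraints_iff (a b c : ℤ × ℤ) :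
    (InCone c ∧ Prop51Constraints a.1 a.2 b.1 b.2) ↔ Admissible a b c := by
  unfold Prop51Constraints Admissible
  rw [mul_pos_or_sub_pos_iff]
  constructor
  · rintro ⟨hc, hab, hsign, ⟨-, ha⟩, -, hb⟩
    exact ⟨hc, hab, hsign, ha, hb⟩
  · rintro ⟨hc, hab, hsign, ha, hb⟩
    obtain ⟨ha₀, hb₀⟩ := ne_zero_of_cross_pos hab
    exact ⟨hc, hab, hsign, ⟨inCone_of_fst_neg ha₀ ha, ha⟩, inCone_of_fst_neg hb₀ hb, hb⟩

namespace Admissible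

variable {a b c : ℤ × ℤ}

theorem cross_pos (h : Admissible a b c) : 0 < cross a b := h.2.1

theorem not_reverse (hsum : a + b + c = 0) (h : Admissible a b c) :
    ¬Admissible b a c ∧ ¬Admissible a c b ∧ ¬Admissible c b a := by
  have hbc := cross_rotate hsum
  have hca := cross_rotate ((add_rotate a b c).symm.trans hsum)
  have hab := h.cross_pos
  refine ⟨fun h' => ?_, fun h' => ?_, fun h' => ?_⟩ <;>
    · have := h'.cross_pos
      rw [cross_swap] at this
      linarith

theorem reflect_iff : Admissible (reflect b) (reflect a) (reflect c) ↔ Admissible a b c := by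
  simp only [Admissible, inCone_reflect, outsideCone_reflect, cross_reflect, reflect_fst,
    reflect_snd, Left.neg_neg_iff, Left.neg_pos_iff]
  tauto

theorem rotate_of_outsideCone_left (hsum : a + b + c = 0) (h : Admissible a b c)
    (ha : OutsideCone a) : Admissible c a b := by
  obtain ⟨hc, hab, -, ha₁, hb₁⟩ := h
  replace ha₁ := ha₁ ha
  have hneg : c = -(a + b) := eq_neg_of_add_eq_zero_right hsum
  have hb : InCone b := by
    refine (inCone_or_outsideCone (ne_zero_of_cross_pos hab).2).resolve_right fun hb => ?_
    have := ha.add hb ha₁ (hb₁ hb)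
    rw [← outsideCone_neg, ← hneg] at this
    exact hc.not_outsideCone this
  refine ⟨hb, ?_, ?_, fun hc' => absurd hc' hc.not_outsideCone, fun _ => ha₁⟩
  · rwa [cross_rotate ((add_rotate a b c).symm.trans hsum), cross_rotate hsum]
  · -- Otherwise `a' ≤ 0 < c'`: if `b' < 0` the pair `(a, b)` is negatively oriented, and if
    -- `b' > 0` the upper half of the cone contains `b + c = -a`.
    by_contra! hsign
    obtain ⟨hc₂, ha₂⟩ := hsign
    replace hc₂ := lt_of_le_of_ne hc₂ hc.snd_ne_zero.symm
    rcases hb.snd_ne_zero.lt_or_gt with hb₂ | hb₂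
    · exact (cross_neg_of_outsideCone_of_inCone ha ha₁ ha₂ hb hb₂).not_gt hab
    · have := hb.add hc hb₂ hc₂
      rw [← inCone_neg, neg_eq_of_add_eq_zero_left ((add_assoc a b c).symm.trans hsum)] at this
      exact this.not_outsideCone ha

theorem rotate_of_outsideCone_right (hsum : a + b + c = 0) (h : Admissible a b c)
    (hb : OutsideCone b) : Admissible b c a := by
  have hsum' : reflect b + reflect a + reflect c = 0 := by
    simp only [Prod.ext_iff, Prod.fst_add, Prod.snd_add, Prod.fst_zero, Prod.snd_zero,
      reflect_fst, reflect_snd] at hsum ⊢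
    constructor <;> linarith
  exact reflect_iff.mp <|
    rotate_of_outsideCone_left hsum' (reflect_iff.mpr h) (outsideCone_reflect.mpr hb)

theorem iff_of_inCone (ha : InCone a) (hb : InCone b) (hc : InCone c) (hab : 0 < cross a b) :
    Admissible a b c ↔ (a.2 < 0 ∨ 0 < b.2) := by
  simp [Admissible, hc, hab, ha.not_outsideCone, hb.not_outsideCone]

theorem xor_rotate (hsum : a + b + c = 0) (h : Admissible a b c) :
    Xor (Admissible b c a) (Admissible c a b) := by
  have hbc := cross_rotate hsum
  have hca := cross_rotate ((add_rotate a b c).symm.trans hsum)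
  obtain ⟨ha₀, hb₀⟩ := ne_zero_of_cross_pos h.cross_pos
  rcases inCone_or_outsideCone ha₀ with ha | ha
  · rcases inCone_or_outsideCone hb₀ with hb | hb
    · rw [iff_of_inCone hb h.1 ha (hbc ▸ h.cross_pos),
        iff_of_inCone h.1 ha hb (hca ▸ hbc ▸ h.cross_pos)]
      exact xor_neg_or_pos_of_add_eq_zero (by simpa using congrArg Prod.snd hsum)
        h.1.snd_ne_zero h.2.2.1
    · exact .inl ⟨h.rotate_of_outsideCone_right hsum hb, fun h' => h'.1.not_outsideCone hb⟩
  · exact .inr ⟨h.rotate_of_outsideCone_left hsum ha, fun h' => h'.1.not_outsideCone ha⟩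

end Admissible

theorem admissiblePerm_iff (P : Fin 3 → ℤ × ℤ) (τ : Equiv.Perm (Fin 3)) :
    AdmissiblePerm P τ ↔ P 0 + P 1 + P 2 = 0 ∧ Admissible (P (τ 0)) (P (τ 1)) (P (τ 2)) := by
  have hsum : P (τ 0) + P (τ 1) + P (τ 2) = P 0 + P 1 + P 2 := by
    simpa only [Fin.sum_univ_three] using Equiv.sum_comp τ P
  rw [AdmissiblePerm, ← inCone_and_prop51Constraints_iff, ← hsum, Prod.ext_iff]
  simp only [Prod.fst_add, Prod.snd_add, Prod.fst_zero, Prod.snd_zero, and_assoc]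
  rfl

theorem ncard_admissiblePerm_comp (P : Fin 3 → ℤ × ℤ) (τ : Equiv.Perm (Fin 3)) :
    {σ | AdmissiblePerm (P ∘ τ) σ}.ncard = {σ | AdmissiblePerm P σ}.ncard :=
  show ((τ * ·) ⁻¹' {σ | AdmissiblePerm P σ}).ncard = _ from
    Set.ncard_preimage_of_injective_subset_range (mul_right_injective τ)
      fun σ _ => ⟨τ⁻¹ * σ, mul_inv_cancel_left τ σ⟩

theorem perm_fin_three_cases (σ : Equiv.Perm (Fin 3)) :
    σ = 1 ∨ σ = finRotate 3 ∨ σ = finRotate 3 * finRotate 3 ∨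
      σ = Equiv.swap 0 1 ∨ σ = Equiv.swap 0 2 ∨ σ = Equiv.swap 1 2 := by
  revert σ; decide

variable {P : Fin 3 → ℤ × ℤ}

theorem admissiblePerm_iff_of_admissible (hsum : P 0 + P 1 + P 2 = 0)
    (h : Admissible (P 0) (P 1) (P 2)) (σ : Equiv.Perm (Fin 3)) :
    AdmissiblePerm P σ ↔ σ = 1 ∨ σ = finRotate 3 ∧ Admissible (P 1) (P 2) (P 0) ∨
      σ = finRotate 3 * finRotate 3 ∧ Admissible (P 2) (P 0) (P 1) := by
  obtain ⟨h₁, h₂, h₃⟩ := h.not_reverse hsum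
  rcases perm_fin_three_cases σ with rfl | rfl | rfl | rfl | rfl | rfl <;>
    simp +decide [admissiblePerm_iff, hsum, Equiv.swap_apply_def, h, h₁, h₂, h₃]

theorem ncard_admissiblePerm_of_admissible (hsum : P 0 + P 1 + P 2 = 0)
    (h : Admissible (P 0) (P 1) (P 2)) : {σ | AdmissiblePerm P σ}.ncard = 2 := by
  rcases h.xor_rotate hsum with ⟨h₁, h₂⟩ | ⟨h₂, h₁⟩
  · refine Set.ncard_eq_two.mpr ⟨1, finRotate 3, by decide, Set.ext fun σ => ?_⟩
    simp [admissiblePerm_iff_of_admissible hsum h, h₁, h₂]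
  · refine Set.ncard_eq_two.mpr ⟨1, finRotate 3 * finRotate 3, by decide, Set.ext fun σ => ?_⟩
    simp [admissiblePerm_iff_of_admissible hsum h, h₁, h₂]

end Prop51

theorem exactly_two_admissible_orderings (P : Fin 3 → ℤ × ℤ)
    (h : ∃ τ : Equiv.Perm (Fin 3), AdmissiblePerm P τ) :
    {τ : Equiv.Perm (Fin 3) | AdmissiblePerm P τ}.ncard = 2 := by
  obtain ⟨τ, hτ⟩ := h
  obtain ⟨hsum, hadm⟩ := (Prop51.admissiblePerm_iff (P ∘ τ) 1).mp hτ
  rw [← Prop51.ncard_admissiblePerm_comp P τ]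
  exact Prop51.ncard_admissiblePerm_of_admissible hsum hadm
end

section
/- Let p, p' be integers satisfying: not both are zero; if p = 0 then p' = 1 or p' = −1; if p' = 0 then p = 1; if both are nonzero then they are relatively prime; if p < 0 then 2·p'^2 > 3·p^2; and if 2·p'^2 < 3·p^2 then p > 0. Then there exists exactly one angle θ ∈ (0, π) such that p'·(1 − 3·cos²θ) = √6·p·cos θ and p'·cos θ ≥ 0. -/
/-!
Writing `c = cos θ`, and `x = p' c` when `p' ≠ 0`, the two conditions say exactly that `x` is a
nonnegative root of `3 x² + √6 p x = p'²`. Since the right side is positive, such a root exists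
and is unique, and it lies below `|p'|` (i.e. `|c| < 1`) iff `p'² < 3 p'² + √6 p |p'|`, which is
automatic for `p ≥ 0` and is `3 p² < 2 p'²` for `p < 0`. Since `cos` is a bijection from `(0, π)`
onto `(-1, 1)`, this `c` determines `θ`.
-/

open Real Set

section QuadraticRoot

variable {a b k x : ℝ}

lemma mul_add_pos_of_quadratic_eq (hk : 0 < k) (hx : 0 ≤ x) (hxk : a * x ^ 2 + b * x = k) :
    0 < a * x + b :=
  pos_of_mul_pos_right (by linear_combination hk - hxk : 0 < x * (a * x + b)) hx

lemma lt_iff_of_quadratic_eq {m : ℝ} (ha : 0 ≤ a) (hk : 0 < k) (hx : 0 ≤ x)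
    (hxk : a * x ^ 2 + b * x = k) (hm : 0 ≤ m) :
    x < m ↔ k < a * m ^ 2 + b * m := by
  have hpos : 0 < a * (m + x) + b := by
    nlinarith [mul_add_pos_of_quadratic_eq hk hx hxk, mul_nonneg ha hm]
  have hfactor : a * m ^ 2 + b * m - k = (m - x) * (a * (m + x) + b) := by
    linear_combination hxk
  rw [← sub_pos, ← sub_pos (a := a * m ^ 2 + b * m), hfactor, mul_pos_iff_of_pos_right hpos]

lemma exists_nonneg_quadratic_eq (ha : 0 < a) (hk : 0 < k) :
    ∃ x, 0 ≤ x ∧ a * x ^ 2 + b * x = k := by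
  set D := √(b ^ 2 + 4 * a * k)
  have hD : D ^ 2 = b ^ 2 + 4 * a * k := sq_sqrt (by positivity)
  have hbD : b ≤ D :=
    calc b ≤ |b| := le_abs_self b
      _ = √(b ^ 2) := (sqrt_sq_eq_abs b).symm
      _ ≤ D := sqrt_le_sqrt (by nlinarith)
  refine ⟨(-b + D) / (2 * a), div_nonneg (by linarith) (by positivity), ?_⟩
  field_simp
  linear_combination hD

lemma existsUnique_nonneg_quadratic_eq (ha : 0 < a) (hk : 0 < k) :
    ∃! x, 0 ≤ x ∧ a * x ^ 2 + b * x = k := by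
  refine existsUnique_of_exists_of_unique (exists_nonneg_quadratic_eq ha hk) ?_
  rintro x y ⟨hx, hxk⟩ ⟨hy, hyk⟩
  refine le_antisymm (not_lt.1 fun hyx => ?_) (not_lt.1 fun hxy => ?_)
  · exact (lt_iff_of_quadratic_eq ha.le hk hy hyk hx).1 hyx |>.ne hxk.symm
  · exact (lt_iff_of_quadratic_eq ha.le hk hx hxk hy).1 hxy |>.ne hyk.symm

end QuadraticRoot

lemma existsUnique_mem_Ioo_pi_of_existsUnique_cos {Q : ℝ → Prop}
    (h : ∃! c, c ∈ Ioo (-1) 1 ∧ Q c) : ∃! θ, θ ∈ Ioo 0 π ∧ Q (cos θ) := by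
  obtain ⟨c, ⟨hc, hQ⟩, huniq⟩ := h
  refine ⟨arccos c, ⟨cosPartialHomeomorph.map_target' hc, ?_⟩, ?_⟩
  · rwa [cos_arccos hc.1.le hc.2.le]
  · rintro θ ⟨hθ, hQθ⟩
    rw [← huniq (cos θ) ⟨mapsTo_cos_Ioo hθ, hQθ⟩, arccos_cos hθ.1.le hθ.2.le]

lemma existsUnique_cos_eq_of_ne_zero {P P' : ℝ} (hP' : P' ≠ 0)
    (h : P < 0 → 3 * P ^ 2 < 2 * P' ^ 2) :
    ∃! c, c ∈ Ioo (-1) 1 ∧ P' * (1 - 3 * c ^ 2) = √6 * P * c ∧ 0 ≤ P' * c := by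
  have hroot : ∀ c, P' * (1 - 3 * c ^ 2) = √6 * P * c ↔
      3 * (P' * c) ^ 2 + √6 * P * (P' * c) = P' ^ 2 := fun c => by
    rw [← mul_right_inj' hP']
    constructor <;> intro heq <;> linear_combination -heq
  have hmem : ∀ c, 0 ≤ P' * c → (c ∈ Ioo (-1) 1 ↔ P' * c < |P'|) := fun c hc => by
    rw [← abs_of_nonneg hc, abs_mul, mul_lt_iff_lt_one_right (abs_pos.2 hP'), abs_lt, mem_Ioo]
  have hbound : P' ^ 2 < 3 * |P'| ^ 2 + √6 * P * |P'| := by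
    have hP'abs : 0 < |P'| := abs_pos.2 hP'
    rcases le_or_gt 0 P with hP | hP
    · nlinarith [sq_abs P', mul_nonneg (mul_nonneg (sqrt_nonneg 6) hP) hP'abs.le]
    · have hlt : √6 * -P < 2 * |P'| := by
        refine lt_of_pow_lt_pow_left₀ 2 (by positivity) ?_
        rw [mul_pow, mul_pow, sq_sqrt (by norm_num), neg_sq, sq_abs]
        linarith [h hP]
      nlinarith [sq_abs P']
  obtain ⟨x, ⟨hx, hxk⟩, huniq⟩ :=
    existsUnique_nonneg_quadratic_eq (a := 3) (b := √6 * P) (k := P' ^ 2) (by norm_num)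
      (by positivity)
  have hPx : P' * (x / P') = x := mul_div_cancel₀ x hP'
  have hPx0 : 0 ≤ P' * (x / P') := hPx.symm ▸ hx
  refine ⟨x / P', ⟨?_, ?_, hPx0⟩, ?_⟩
  · rw [hmem _ hPx0, hPx,
      lt_iff_of_quadratic_eq (by norm_num) (by positivity) hx hxk (abs_nonneg _)]
    exact hbound
  · rw [hroot, hPx]
    exact hxk
  · rintro c ⟨-, hc, hc0⟩
    rw [eq_div_iff hP', mul_comm]
    exact huniq _ ⟨hc0, (hroot c).1 hc⟩

lemma existsUnique_cos_eq {P P' : ℝ} (h0 : P' = 0 → P ≠ 0)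
    (h : P < 0 → 3 * P ^ 2 < 2 * P' ^ 2) :
    ∃! c, c ∈ Ioo (-1) 1 ∧ P' * (1 - 3 * c ^ 2) = √6 * P * c ∧ 0 ≤ P' * c := by
  rcases eq_or_ne P' 0 with rfl | hP'
  · have hP := h0 rfl
    refine ⟨0, by simp, fun c ⟨_, hc, _⟩ => ?_⟩
    simpa [hP] using hc.symm
  · exact existsUnique_cos_eq_of_ne_zero hP' h

theorem reeb_orbit_angle_unique_general (p p' : ℤ)
    (h2 : p' = 0 → p = 1)
    (h4 : p < 0 → 3 * p ^ 2 < 2 * p' ^ 2) :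
    ∃! θ : ℝ, θ ∈ Set.Ioo 0 Real.pi ∧
      (p' : ℝ) * (1 - 3 * Real.cos θ ^ 2) = Real.sqrt 6 * (p : ℝ) * Real.cos θ ∧
      0 ≤ (p' : ℝ) * Real.cos θ := by
  refine existsUnique_mem_Ioo_pi_of_existsUnique_cos (existsUnique_cos_eq ?_ ?_)
  · intro hp'
    simp [h2 (mod_cast hp')]
  · intro hp
    exact_mod_cast h4 (mod_cast hp)

theorem reeb_orbit_angle_unique (p p' : ℤ)
    (h0 : ¬(p = 0 ∧ p' = 0))
    (h1 : p = 0 → p' = 1 ∨ p' = -1)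
    (h2 : p' = 0 → p = 1)
    (h3 : p ≠ 0 → p' ≠ 0 → IsCoprime p p')
    (h4 : p < 0 → 3 * p ^ 2 < 2 * p' ^ 2)
    (h5 : 2 * p' ^ 2 < 3 * p ^ 2 → 0 < p) :
    ∃! θ : ℝ, θ ∈ Set.Ioo 0 Real.pi ∧
      (p' : ℝ) * (1 - 3 * Real.cos θ ^ 2) = Real.sqrt 6 * (p : ℝ) * Real.cos θ ∧
      0 ≤ (p' : ℝ) * Real.cos θ :=
  reeb_orbit_angle_unique_general p p' h2 h4
end

section
/- Let ζ > 0 be real and let M be a positive integer. For E ∈ ℝ, there exists a pair of differentiable 2πM-periodic functions x, y : ℝ → ℝ, not both identically zero, satisfying −y'(τ) = E·x(τ) and x'(τ) − ζ·y(τ) = E·y(τ) for all τ, if and only if E = (−ζ + √(ζ² + 4n²/M²))/2 or E = (−ζ − √(ζ² + 4n²/M²))/2 for some integer n ≥ 0. Moreover, the solutions for E = 0 are exactly the pairs with x constant and y identically zero. -/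
open Real

private lemma energy_zero {lam : ℝ} (hlam : 0 < lam) {f f1 : ℝ → ℝ}
    (hf : ∀ τ, HasDerivAt f (f1 τ) τ) (hf1 : ∀ τ, HasDerivAt f1 (-lam * f τ) τ)
    (h0 : f 0 = 0) (h1 : f1 0 = 0) : ∀ τ, f τ = 0 := by
  set Q : ℝ → ℝ := fun τ => f1 τ ^ 2 + lam * f τ ^ 2 with hQdef
  have hQ : ∀ τ, HasDerivAt Q 0 τ := by
    intro τ
    have h := ((hf1 τ).pow 2).add (((hf τ).pow 2).const_mul lam)
    refine h.congr_deriv (Eq.symm ?_)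
    push_cast
    ring
  have hconst : ∀ τ, Q τ = Q 0 := fun τ =>
    is_const_of_deriv_eq_zero (fun t => (hQ t).differentiableAt)
      (fun t => (hQ t).deriv) τ 0
  intro τ
  have h2 := hconst τ
  have hQ0 : Q 0 = 0 := by simp [hQdef, h0, h1]
  rw [hQ0] at h2
  have hsq : f τ ^ 2 = 0 := by
    have := sq_nonneg (f1 τ); have := sq_nonneg (f τ)
    simp only [hQdef] at h2
    nlinarith
  exact pow_eq_zero_iff (by norm_num) |>.mp hsq

private lemma mono_per_le {g : ℝ → ℝ} {T : ℝ} (hT : 0 < T)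
    (hg : Function.Periodic g T) (hm : Monotone g) {a b : ℝ} (hab : a ≤ b) :
    g a = g b := by
  obtain ⟨n, hn⟩ := exists_nat_ge ((b - a) / T)
  have hb : b ≤ a + n * T := by
    rw [div_le_iff₀ hT] at hn; linarith
  have hper : g (a + n * T) = g a := hg.nat_mul n a
  exact le_antisymm (hm hab) (le_of_le_of_eq (hm hb) hper)

private lemma mono_per_const {g : ℝ → ℝ} {T : ℝ} (hT : 0 < T)
    (hg : Function.Periodic g T) (hm : Monotone g) (a b : ℝ) : g a = g b := by
  rcases le_total a b with h | h
  · exact mono_per_le hT hg hm h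
  · exact (mono_per_le hT hg hm h).symm

set_option maxHeartbeats 1000000 in
theorem spectrum_L0_zeta (ζ : ℝ) (hζ : 0 < ζ) (M : ℕ) (hM : 0 < M) (E : ℝ) :
    ((∃ x y : ℝ → ℝ, Differentiable ℝ x ∧ Differentiable ℝ y ∧
        Function.Periodic x (2 * Real.pi * (M : ℝ)) ∧
        Function.Periodic y (2 * Real.pi * (M : ℝ)) ∧
        ¬(∀ τ : ℝ, x τ = 0 ∧ y τ = 0) ∧
        (∀ τ : ℝ, -deriv y τ = E * x τ ∧ deriv x τ - ζ * y τ = E * y τ)) ↔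
      (∃ n : ℕ, E = (-ζ + Real.sqrt (ζ ^ 2 + 4 * (n : ℝ) ^ 2 / (M : ℝ) ^ 2)) / 2 ∨
        E = (-ζ - Real.sqrt (ζ ^ 2 + 4 * (n : ℝ) ^ 2 / (M : ℝ) ^ 2)) / 2)) ∧
    (∀ x y : ℝ → ℝ, Differentiable ℝ x → Differentiable ℝ y →
      Function.Periodic x (2 * Real.pi * (M : ℝ)) →
      Function.Periodic y (2 * Real.pi * (M : ℝ)) →
      ((∀ τ : ℝ, -deriv y τ = 0 ∧ deriv x τ - ζ * y τ = 0) ↔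
        ((∃ c : ℝ, ∀ τ : ℝ, x τ = c) ∧ (∀ τ : ℝ, y τ = 0)))) := by
  have hM' : (0:ℝ) < (M:ℝ) := by exact_mod_cast hM
  have hπ := Real.pi_pos
  have hT : (0:ℝ) < 2 * Real.pi * (M:ℝ) := by positivity
  constructor
  · constructor
    · rintro ⟨x, y, hx, hy, hpx, hpy, hnz, heq⟩
      have hdx : ∀ τ, HasDerivAt x ((E + ζ) * y τ) τ := by
        intro τ
        have h := (hx τ).hasDerivAt
        have he : deriv x τ = (E + ζ) * y τ := by linarith [(heq τ).2]
        rwa [he] at h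
      have hdy : ∀ τ, HasDerivAt y (-(E * x τ)) τ := by
        intro τ
        have h := (hy τ).hasDerivAt
        have he : deriv y τ = -(E * x τ) := by linarith [(heq τ).1]
        rwa [he] at h
      have key : ∃ n : ℕ, E * (E + ζ) = (n:ℝ)^2 / (M:ℝ)^2 := by
        rcases lt_trichotomy (E * (E + ζ)) 0 with hlneg | hlneg | hlneg
        · -- negative: contradiction
          exfalso
          have hEne : E ≠ 0 := by intro h; rw [h, zero_mul] at hlneg; exact lt_irrefl _ hlneg
          have hEζne : E + ζ ≠ 0 := by intro h; rw [h, mul_zero] at hlneg; exact lt_irrefl _ hlneg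
          set g : ℝ → ℝ := fun τ => (E + ζ) * (x τ * y τ) with hgdef
          have hdg : ∀ τ, HasDerivAt g ((E + ζ)^2 * y τ ^ 2 - (E * (E + ζ)) * x τ ^ 2) τ := by
            intro τ
            have h := (((hdx τ).mul (hdy τ)).const_mul (E + ζ))
            refine h.congr_deriv (Eq.symm ?_)
            ring
          have hmono : Monotone g := by
            apply monotone_of_deriv_nonneg (fun τ => (hdg τ).differentiableAt)
            intro τ
            rw [(hdg τ).deriv]
            nlinarith [sq_nonneg (y τ), sq_nonneg (x τ), sq_nonneg (E + ζ)]
          have hper : Function.Periodic g (2 * Real.pi * (M:ℝ)) := by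
            intro τ; simp only [hgdef, hpx τ, hpy τ]
          have hconst : ∀ a b : ℝ, g a = g b := mono_per_const hT hper hmono
          have hzero : ∀ τ, x τ = 0 ∧ y τ = 0 := by
            intro τ
            have hg0 : deriv g τ = 0 := by
              have : g = fun _ => g 0 := funext (fun a => hconst a 0)
              rw [this]; simp
            rw [(hdg τ).deriv] at hg0
            have hsqp : 0 < (E + ζ) ^ 2 := by positivity
            constructor
            · have h1 : x τ ^ 2 ≤ 0 := by
                nlinarith [mul_nonneg hsqp.le (sq_nonneg (y τ)), sq_nonneg (x τ)]
              have h2 : x τ ^ 2 = 0 := le_antisymm h1 (sq_nonneg _)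
              exact pow_eq_zero_iff (by norm_num) |>.mp h2
            · have h1 : y τ ^ 2 ≤ 0 := by
                nlinarith [mul_nonneg (neg_nonneg.mpr hlneg.le) (sq_nonneg (x τ)), hsqp, sq_nonneg (y τ)]
              have h2 : y τ ^ 2 = 0 := le_antisymm h1 (sq_nonneg _)
              exact pow_eq_zero_iff (by norm_num) |>.mp h2
          exact hnz hzero
        · exact ⟨0, by rw [hlneg]; norm_num⟩
        · -- positive case
          have hEζne : E + ζ ≠ 0 := by intro h; rw [h, mul_zero] at hlneg; exact lt_irrefl _ hlneg
          set lam := E * (E + ζ) with hlamdef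
          set ω := Real.sqrt lam with hωdef
          have hω : 0 < ω := Real.sqrt_pos.mpr hlneg
          have hω0 : ω ≠ 0 := ne_of_gt hω
          have hω2 : ω ^ 2 = lam := Real.sq_sqrt hlneg.le
          have hlin : ∀ τ : ℝ, HasDerivAt (fun t : ℝ => ω * t) ω τ := by
            intro τ
            simpa using (hasDerivAt_id τ).const_mul ω
          have hcos : ∀ τ : ℝ, HasDerivAt (fun t : ℝ => Real.cos (ω * t)) (-Real.sin (ω * τ) * ω) τ :=
            fun τ => (hlin τ).cos
          have hsin : ∀ τ : ℝ, HasDerivAt (fun t : ℝ => Real.sin (ω * t)) (Real.cos (ω * τ) * ω) τ :=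
            fun τ => (hlin τ).sin
          set A := x 0 with hA
          set B := (E + ζ) * y 0 with hB
          set u : ℝ → ℝ := fun τ => ω * x τ - (A * ω * Real.cos (ω * τ) + B * Real.sin (ω * τ)) with hudef
          set u1 : ℝ → ℝ := fun τ =>
            ω * ((E + ζ) * y τ) - (-(A * ω * ω) * Real.sin (ω * τ) + B * ω * Real.cos (ω * τ)) with hu1def
          have hdu : ∀ τ, HasDerivAt u (u1 τ) τ := by
            intro τ
            have h := ((hdx τ).const_mul ω).sub
              (((hcos τ).const_mul (A * ω)).add ((hsin τ).const_mul B))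
            refine h.congr_deriv (Eq.symm ?_)
            simp only [hu1def]; ring
          have hdu1 : ∀ τ, HasDerivAt u1 (-lam * u τ) τ := by
            intro τ
            have h := (((hdy τ).const_mul (E + ζ)).const_mul ω).sub
              (((hsin τ).const_mul (-(A * ω * ω))).add ((hcos τ).const_mul (B * ω)))
            refine h.congr_deriv (Eq.symm ?_)
            simp only [hudef]
            linear_combination (-(x 0 * ω * Real.cos (ω * τ)) - (E + ζ) * y 0 * Real.sin (ω * τ)) * hω2
          have hu0 : u 0 = 0 := by
            simp only [hudef]
            rw [mul_zero, Real.cos_zero, Real.sin_zero]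
            simp only [hA]; ring
          have hu10 : u1 0 = 0 := by
            simp only [hu1def]
            rw [mul_zero, Real.sin_zero, Real.cos_zero]
            simp only [hB]; ring
          have huz : ∀ τ, u τ = 0 := energy_zero hlneg hdu hdu1 hu0 hu10
          have hu1z : ∀ τ, u1 τ = 0 := by
            intro τ
            have h1 : deriv u τ = u1 τ := (hdu τ).deriv
            have h2 : u = fun _ => (0:ℝ) := funext huz
            rw [h2] at h1; simpa using h1.symm
          have hxv : ∀ τ, ω * x τ = A * ω * Real.cos (ω * τ) + B * Real.sin (ω * τ) := by
            intro τ; have := huz τ; simp only [hudef] at this; linarith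
          have hyv : ∀ τ, ω * ((E + ζ) * y τ) = -(A * ω * ω) * Real.sin (ω * τ) + B * ω * Real.cos (ω * τ) := by
            intro τ; have := hu1z τ; simp only [hu1def] at this; linarith
          set θ := ω * (2 * Real.pi * (M:ℝ)) with hθdef
          have eq1 : A * ω * Real.cos θ + B * Real.sin θ = A * ω := by
            have h := hpx 0
            rw [zero_add] at h
            have h2 := hxv (2 * Real.pi * (M:ℝ))
            rw [← hθdef] at h2
            rw [h, hA] at h2
            rw [hA]
            linarith [h2]
          have eq2 : -(A * ω) * Real.sin θ + B * Real.cos θ = B := by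
            have h := hpy 0
            rw [zero_add] at h
            have h2 := hyv (2 * Real.pi * (M:ℝ))
            rw [← hθdef] at h2
            rw [h] at h2
            have h3 := hyv 0
            simp only [mul_zero, Real.sin_zero, Real.cos_zero] at h3
            apply mul_right_cancel₀ hω0
            linear_combination h3 - h2
          have hAB : (A * ω) ^ 2 + B ^ 2 ≠ 0 := by
            intro h0
            have hAω : A * ω = 0 := by nlinarith [sq_nonneg (A * ω), sq_nonneg B]
            have hB0 : B = 0 := by nlinarith [sq_nonneg (A * ω), sq_nonneg B]
            have hA0 : A = 0 := by
              rcases mul_eq_zero.mp hAω with h | h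
              · exact h
              · exact absurd h hω0
            apply hnz
            intro τ
            have hxτ : x τ = 0 := by
              have := hxv τ
              rw [hA0, hB0] at this
              simp only [zero_mul, mul_zero, zero_add, add_zero] at this
              rcases mul_eq_zero.mp (by linarith : ω * x τ = 0) with h | h
              · exact absurd h hω0
              · exact h
            have hyτ : y τ = 0 := by
              have := hyv τ
              rw [hA0, hB0] at this
              simp only [zero_mul, mul_zero, neg_zero, zero_add, add_zero] at this
              have h4 : ω * ((E + ζ) * y τ) = 0 := by linarith
              rcases mul_eq_zero.mp h4 with h | h
              · exact absurd h hω0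
              · rcases mul_eq_zero.mp h with h' | h'
                · exact absurd h' hEζne
                · exact h'
            exact ⟨hxτ, hyτ⟩
          have hcosθ : Real.cos θ = 1 := by
            have hc : ((A * ω) ^ 2 + B ^ 2) * Real.cos θ = ((A * ω) ^ 2 + B ^ 2) * 1 := by
              linear_combination (A * ω) * eq1 + B * eq2
            exact mul_left_cancel₀ hAB hc
          obtain ⟨k, hk⟩ := (Real.cos_eq_one_iff θ).mp hcosθ
          have hθpos : 0 < θ := by rw [hθdef]; positivity
          have hkpos : (0:ℝ) < (k:ℝ) := by
            have h6 : 0 < (k:ℝ) * (2 * Real.pi) := by rw [hk]; exact hθpos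
            rcases mul_pos_iff.mp h6 with ⟨h7, _⟩ | ⟨_, h8⟩
            · exact h7
            · linarith
          have hkZ : 0 < k := by exact_mod_cast hkpos
          refine ⟨k.toNat, ?_⟩
          have hkn : ((k.toNat : ℕ) : ℝ) = (k : ℝ) := by
            exact_mod_cast Int.toNat_of_nonneg hkZ.le
          have hωval : ω = (k:ℝ) / (M:ℝ) := by
            have h5 : (ω * (M:ℝ) - (k:ℝ)) * (2 * Real.pi) = 0 := by
              rw [hθdef] at hk
              linear_combination -hk
            rcases mul_eq_zero.mp h5 with h | h
            · rw [eq_div_iff (ne_of_gt hM')]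
              linarith
            · exfalso; linarith
          rw [hkn, ← hω2, hωval]
          ring
      obtain ⟨n, hn⟩ := key
      refine ⟨n, ?_⟩
      set s := Real.sqrt (ζ ^ 2 + 4 * (n : ℝ) ^ 2 / (M : ℝ) ^ 2) with hs
      have hsnn : 0 ≤ s := Real.sqrt_nonneg _
      have hs2 : s ^ 2 = ζ ^ 2 + 4 * (n : ℝ) ^ 2 / (M : ℝ) ^ 2 := Real.sq_sqrt (by positivity)
      have hfac : (s - (2 * E + ζ)) * (s + (2 * E + ζ)) = 0 := by
        linear_combination hs2 - 4 * hn
      rcases mul_eq_zero.mp hfac with h | h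
      · left; linarith
      · right; linarith
    · rintro ⟨n, hn⟩
      set s := Real.sqrt (ζ ^ 2 + 4 * (n : ℝ) ^ 2 / (M : ℝ) ^ 2) with hs
      have hs2 : s ^ 2 = ζ ^ 2 + 4 * (n : ℝ) ^ 2 / (M : ℝ) ^ 2 := Real.sq_sqrt (by positivity)
      have hc2 : ((n:ℝ) / (M:ℝ)) ^ 2 = E * (E + ζ) := by
        rcases hn with h | h <;> rw [h] <;> linear_combination -hs2 / 4
      by_cases hEζ : E + ζ = 0
      · -- x = 0, y = 1
        refine ⟨fun _ => 0, fun _ => 1, differentiable_const _, differentiable_const _,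
          fun τ => rfl, fun τ => rfl, ?_, ?_⟩
        · intro h
          have := (h 0).2
          norm_num at this
        · intro τ
          constructor
          · simp
          · simp
            linarith
      · set c := (n:ℝ) / (M:ℝ) with hcdef
        set x : ℝ → ℝ := fun τ => Real.cos (c * τ) with hxdef
        set y : ℝ → ℝ := fun τ => -(c * Real.sin (c * τ)) / (E + ζ) with hydef
        have hcos : ∀ τ, HasDerivAt (fun t : ℝ => Real.cos (c * t)) (-(c * Real.sin (c * τ))) τ := by
          intro τ
          have := (Real.hasDerivAt_cos (c * τ)).comp τ ((hasDerivAt_id τ).const_mul c)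
          refine this.congr_deriv (Eq.symm ?_); ring
        have hsin : ∀ τ, HasDerivAt (fun t : ℝ => Real.sin (c * t)) (c * Real.cos (c * τ)) τ := by
          intro τ
          have := (Real.hasDerivAt_sin (c * τ)).comp τ ((hasDerivAt_id τ).const_mul c)
          refine this.congr_deriv (Eq.symm ?_); ring
        have hdx : ∀ τ, HasDerivAt x (-(c * Real.sin (c * τ))) τ := hcos
        have hdy : ∀ τ, HasDerivAt y (-(c * (c * Real.cos (c * τ))) / (E + ζ)) τ := by
          intro τ
          have h := ((hsin τ).const_mul c).neg.div_const (E + ζ)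
          exact h
        have hshift : ∀ τ : ℝ, c * (τ + 2 * Real.pi * (M:ℝ)) = c * τ + (n:ℕ) * (2 * Real.pi) := by
          intro τ
          have hM0 : (M:ℝ) ≠ 0 := ne_of_gt hM'
          rw [hcdef]
          field_simp [hcdef]
        refine ⟨x, y, fun τ => (hdx τ).differentiableAt, fun τ => (hdy τ).differentiableAt,
          ?_, ?_, ?_, ?_⟩
        · intro τ
          simp only [hxdef]
          rw [hshift τ]
          exact Real.cos_add_nat_mul_two_pi _ n
        · intro τ
          simp only [hydef]
          rw [hshift τ]
          rw [Real.sin_add_nat_mul_two_pi]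
        · intro h
          have := (h 0).1
          simp [hxdef] at this
        · intro τ
          rw [(hdx τ).deriv, (hdy τ).deriv]
          constructor
          · simp only [hxdef]
            field_simp
            linear_combination Real.cos (c * τ) * hc2
          · simp only [hydef]
            field_simp
            ring
  · intro x y hx hy hpx hpy
    constructor
    · intro heq
      have hdy0 : ∀ τ, deriv y τ = 0 := fun τ => by linarith [(heq τ).1]
      have hyc : ∀ τ, y τ = y 0 := fun τ => is_const_of_deriv_eq_zero hy hdy0 τ 0
      have hdxv : ∀ τ, HasDerivAt x (ζ * y 0) τ := by
        intro τ
        have h := (hx τ).hasDerivAt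
        have he : deriv x τ = ζ * y 0 := by
          have := (heq τ).2
          rw [hyc τ] at this
          linarith
        rwa [he] at h
      have hf : ∀ τ : ℝ, HasDerivAt (fun t => x t - ζ * y 0 * t) 0 τ := by
        intro τ
        have h := (hdxv τ).sub ((hasDerivAt_id τ).const_mul (ζ * y 0))
        refine h.congr_deriv (Eq.symm ?_); ring
      have hfc : ∀ a b : ℝ, x a - ζ * y 0 * a = x b - ζ * y 0 * b := fun a b =>
        is_const_of_deriv_eq_zero (fun t => (hf t).differentiableAt)
          (fun t => (hf t).deriv) a b
      have hy00 : y 0 = 0 := by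
        have h1 := hfc (2 * Real.pi * (M:ℝ)) 0
        have h2 := hpx 0
        rw [zero_add] at h2
        rw [h2] at h1
        have : ζ * y 0 * (2 * Real.pi * (M:ℝ)) = 0 := by linarith
        have h3 := mul_eq_zero.mp this
        rcases h3 with h3 | h3
        · rcases mul_eq_zero.mp h3 with h4 | h4
          · linarith
          · exact h4
        · linarith
      refine ⟨⟨x 0, ?_⟩, ?_⟩
      · intro τ
        have := hfc τ 0
        rw [hy00] at this
        simpa using this
      · intro τ
        rw [hyc τ, hy00]
    · rintro ⟨⟨c, hc⟩, hy0⟩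
      have hxe : x = fun _ => c := funext hc
      have hye : y = fun _ => 0 := funext hy0
      intro τ
      rw [hxe, hye]
      simp
end

section
/- Let M be a positive integer. For E ∈ ℝ, there exists a pair of differentiable 2πM-periodic functions x, y : ℝ → ℝ, not both identically zero, satisfying −(√6/2)·x(τ) − y'(τ) = E·x(τ) and x'(τ) − (√6/2)·y(τ) = E·y(τ) for all τ, if and only if E = −√6/2 + n/M for some integer n. In particular, for E = 0 the only solution is the identically zero pair. -/
/-!
With `k = E + √6 / 2` the system reads `x' = k y`, `y' = -k x`: the pair `(x, y)` turns with
angular speed `k`, so `x τ cos kτ - y τ sin kτ` and `y τ cos kτ + x τ sin kτ` are constant.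
A nonzero solution is therefore `2πM`-periodic exactly when `cos (2πM k) = 1`, i.e. `k ∈ ℤ / M`,
and `(cos kτ, -sin kτ)` realises every such `k`. The eigenvalue `E = 0` would make `√6` rational.
-/

open Real Function

section Rotation

variable {k : ℝ} {x y : ℝ → ℝ}

lemma rotate_eq_initial (hx : ∀ τ, HasDerivAt x (k * y τ) τ)
    (hy : ∀ τ, HasDerivAt y (-(k * x τ)) τ) (τ : ℝ) :
    x τ * cos (k * τ) - y τ * sin (k * τ) = x 0 := by
  have hderiv : ∀ t, HasDerivAt (fun t => x t * cos (k * t) - y t * sin (k * t)) 0 t := by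
    intro t
    have hk : HasDerivAt (fun t => k * t) k t := by simpa using (hasDerivAt_id t).const_mul k
    exact (((hx t).fun_mul hk.cos).fun_sub ((hy t).fun_mul hk.sin)).congr_deriv (by ring)
  simpa using is_const_of_deriv_eq_zero (fun t => (hderiv t).differentiableAt)
    (fun t => (hderiv t).deriv) τ 0

lemma eq_rotation (hx : ∀ τ, HasDerivAt x (k * y τ) τ)
    (hy : ∀ τ, HasDerivAt y (-(k * x τ)) τ) (τ : ℝ) :
    x τ = x 0 * cos (k * τ) + y 0 * sin (k * τ) ∧
      y τ = y 0 * cos (k * τ) - x 0 * sin (k * τ) := by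
  have hxy := rotate_eq_initial hx hy τ
  have hyx : y τ * cos (k * τ) + x τ * sin (k * τ) = y 0 := by
    simpa using rotate_eq_initial (x := y) (y := -x) (by simpa using hy)
      (fun τ => (hx τ).neg) τ
  have hpyth := sin_sq_add_cos_sq (k * τ)
  constructor
  · linear_combination cos (k * τ) * hxy + sin (k * τ) * hyx - x τ * hpyth
  · linear_combination cos (k * τ) * hyx - sin (k * τ) * hxy - y τ * hpyth

lemma cos_mul_eq_one_of_periodic (hx : ∀ τ, HasDerivAt x (k * y τ) τ)
    (hy : ∀ τ, HasDerivAt y (-(k * x τ)) τ) {T : ℝ} (hxT : Periodic x T) (hyT : Periodic y T)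
    (hne : ¬∀ τ, x τ = 0 ∧ y τ = 0) : cos (k * T) = 1 := by
  have hnorm : x 0 ^ 2 + y 0 ^ 2 ≠ 0 := by
    intro h0
    obtain ⟨hx0, hy0⟩ : x 0 = 0 ∧ y 0 = 0 := by
      constructor <;> nlinarith [sq_nonneg (x 0), sq_nonneg (y 0)]
    exact hne fun τ => by simpa [hx0, hy0] using eq_rotation hx hy τ
  obtain ⟨hxT0, hyT0⟩ := eq_rotation hx hy T
  rw [hxT.eq] at hxT0
  rw [hyT.eq] at hyT0
  have hfactor : (x 0 ^ 2 + y 0 ^ 2) * (cos (k * T) - 1) = 0 := by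
    linear_combination (-x 0) * hxT0 - y 0 * hyT0
  linarith [(mul_eq_zero.1 hfactor).resolve_left hnorm]

end Rotation

lemma cos_mul_two_pi_mul_eq_one_iff {k M : ℝ} (hM : M ≠ 0) :
    cos (k * (2 * π * M)) = 1 ↔ ∃ n : ℤ, k = n / M := by
  rw [cos_eq_one_iff]
  refine exists_congr fun n => ?_
  rw [eq_div_iff hM]
  constructor
  · intro h
    apply mul_right_cancel₀ two_pi_pos.ne'
    linear_combination -h
  · intro h
    linear_combination -(2 * π) * h

lemma eigen_iff_hasDerivAt {c E : ℝ} {x y : ℝ → ℝ} (hx : Differentiable ℝ x)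
    (hy : Differentiable ℝ y) :
    (∀ τ, -c * x τ - deriv y τ = E * x τ ∧ deriv x τ - c * y τ = E * y τ) ↔
      (∀ τ, HasDerivAt x ((c + E) * y τ) τ) ∧ (∀ τ, HasDerivAt y (-((c + E) * x τ)) τ) := by
  constructor
  · intro h
    refine ⟨fun τ => (hx τ).hasDerivAt.congr_deriv ?_, fun τ => (hy τ).hasDerivAt.congr_deriv ?_⟩
      <;> linarith [(h τ).1, (h τ).2]
  · rintro ⟨hx', hy'⟩ τ
    rw [(hx' τ).deriv, (hy' τ).deriv]
    constructor <;> ring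

theorem exists_periodic_eigenpair_iff (c E : ℝ) {M : ℕ} (hM : M ≠ 0) :
    (∃ x y : ℝ → ℝ, Differentiable ℝ x ∧ Differentiable ℝ y ∧
        Periodic x (2 * π * M) ∧ Periodic y (2 * π * M) ∧
        ¬(∀ τ, x τ = 0 ∧ y τ = 0) ∧
        (∀ τ, -c * x τ - deriv y τ = E * x τ ∧ deriv x τ - c * y τ = E * y τ)) ↔
      ∃ n : ℤ, E = -c + n / M := by
  simp_rw [eq_neg_add_iff_add_eq, ← cos_mul_two_pi_mul_eq_one_iff (Nat.cast_ne_zero.2 hM)]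
  constructor
  · rintro ⟨x, y, hx, hy, hxT, hyT, hne, heigen⟩
    obtain ⟨hx', hy'⟩ := (eigen_iff_hasDerivAt hx hy).1 heigen
    exact cos_mul_eq_one_of_periodic hx' hy' hxT hyT hne
  · intro hcos
    set k := c + E
    obtain ⟨n, hn⟩ := (cos_eq_one_iff _).1 hcos
    have hk : ∀ t, HasDerivAt (fun t => k * t) k t := fun t => by
      simpa using (hasDerivAt_id t).const_mul k
    have hx : ∀ t, HasDerivAt (fun t => cos (k * t)) (k * -sin (k * t)) t := fun t => by
      simpa [mul_comm] using (hk t).cos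
    have hy : ∀ t, HasDerivAt (fun t => -sin (k * t)) (-(k * cos (k * t))) t := fun t => by
      simpa [mul_comm] using (hk t).sin.fun_neg
    refine ⟨_, _, fun t => (hx t).differentiableAt, fun t => (hy t).differentiableAt,
      fun t => ?_, fun t => ?_, fun h => by simpa using (h 0).1,
      (eigen_iff_hasDerivAt (fun t => (hx t).differentiableAt)
        (fun t => (hy t).differentiableAt)).2 ⟨hx, hy⟩⟩
    · simp only [mul_add, ← hn, cos_add_int_mul_two_pi]
    · simp only [mul_add, ← hn, sin_add_int_mul_two_pi]

lemma irrational_sqrt_six : Irrational √6 := by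
  exact_mod_cast irrational_sqrt_natCast_iff.2 (by norm_num : ¬IsSquare 6)

theorem spectrum_L0_sqrt6 (M : ℕ) (hM : 0 < M) (E : ℝ) :
    ((∃ x y : ℝ → ℝ, Differentiable ℝ x ∧ Differentiable ℝ y ∧
        Function.Periodic x (2 * Real.pi * (M : ℝ)) ∧
        Function.Periodic y (2 * Real.pi * (M : ℝ)) ∧
        ¬(∀ τ : ℝ, x τ = 0 ∧ y τ = 0) ∧
        (∀ τ : ℝ, -(Real.sqrt 6 / 2) * x τ - deriv y τ = E * x τ ∧
          deriv x τ - (Real.sqrt 6 / 2) * y τ = E * y τ)) ↔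
      (∃ n : ℤ, E = -(Real.sqrt 6 / 2) + (n : ℝ) / (M : ℝ))) ∧
    (∀ x y : ℝ → ℝ, Differentiable ℝ x → Differentiable ℝ y →
      Function.Periodic x (2 * Real.pi * (M : ℝ)) →
      Function.Periodic y (2 * Real.pi * (M : ℝ)) →
      (∀ τ : ℝ, -(Real.sqrt 6 / 2) * x τ - deriv y τ = 0 ∧
        deriv x τ - (Real.sqrt 6 / 2) * y τ = 0) →
      ∀ τ : ℝ, x τ = 0 ∧ y τ = 0) := by
  refine ⟨exists_periodic_eigenpair_iff _ E hM.ne', fun x y hx hy hxT hyT hkernel => ?_⟩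
  by_contra hne
  obtain ⟨n, hn⟩ := (exists_periodic_eigenpair_iff (√6 / 2) 0 hM.ne').1
    ⟨x, y, hx, hy, hxT, hyT, hne, fun τ => by simpa using hkernel τ⟩
  -- `0` is an eigenvalue only if `√6 = 2 n / M` is rational
  refine irrational_sqrt_six.ne_rat (2 * n / M) ?_
  push_cast
  linear_combination 2 * hn
end

section
/- Let E > 0, ρ₀ ∈ ℝ, and let f⁺, f⁻ : [ρ₀, ∞) → ℝ be nonnegative differentiable functions such that f⁺(ρ) + f⁻(ρ) → 0 as ρ → ∞ and, for all ρ ≥ ρ₀, (1/2)·(f⁺)'(ρ) + E·f⁺(ρ) − (E/100)·(f⁺(ρ) + f⁻(ρ)) ≤ 0 and (1/2)·(f⁻)'(ρ) − E·f⁻(ρ) + (E/100)·(f⁺(ρ) + f⁻(ρ)) ≥ 0. Then f⁻(ρ) ≤ f⁺(ρ)/5 for every ρ ≥ ρ₀, and f⁺(ρ) ≤ exp(−(97/50)·E·(ρ − ρ')) · f⁺(ρ') whenever ρ₀ ≤ ρ' ≤ ρ. -/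
/-!
The gap `f⁻ - f⁺ / 5` has nonnegative derivative by the two differential inequalities and tends
to `0`, so it is nonpositive. Feeding `f⁻ ≤ f⁺ / 5` back into the inequality for `f⁺` gives
`(f⁺)' ≤ -(2 - 6 / 250) E f⁺ ≤ -(97 / 50) E f⁺`, and Grönwall's inequality gives the decay.
-/

open Set Filter Topology Real

section Ici

variable {a : ℝ} {f f' : ℝ → ℝ}

theorem monotoneOn_Ici_of_hasDerivWithinAt_nonneg
    (hf : ∀ x ∈ Ici a, HasDerivWithinAt f (f' x) (Ici a) x) (hf' : ∀ x ∈ Ici a, 0 ≤ f' x) :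
    MonotoneOn f (Ici a) :=
  monotoneOn_of_hasDerivWithinAt_nonneg (convex_Ici a) (fun x hx ↦ (hf x hx).continuousWithinAt)
    (by
      rw [interior_Ici]
      exact fun x hx ↦ (hf x (Ioi_subset_Ici_self hx)).mono Ioi_subset_Ici_self)
    (by rw [interior_Ici]; exact fun x hx ↦ hf' x (Ioi_subset_Ici_self hx))

theorem antitoneOn_Ici_of_hasDerivWithinAt_nonpos
    (hf : ∀ x ∈ Ici a, HasDerivWithinAt f (f' x) (Ici a) x) (hf' : ∀ x ∈ Ici a, f' x ≤ 0) :
    AntitoneOn f (Ici a) :=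
  antitoneOn_of_hasDerivWithinAt_nonpos (convex_Ici a) (fun x hx ↦ (hf x hx).continuousWithinAt)
    (by
      rw [interior_Ici]
      exact fun x hx ↦ (hf x (Ioi_subset_Ici_self hx)).mono Ioi_subset_Ici_self)
    (by rw [interior_Ici]; exact fun x hx ↦ hf' x (Ioi_subset_Ici_self hx))

/-- Grönwall's inequality for `f' ≤ -c f`: `exp (c t) * f t` is antitone. -/
theorem le_exp_mul_of_hasDerivWithinAt_le_neg_mul {c : ℝ}
    (hf : ∀ x ∈ Ici a, HasDerivWithinAt f (f' x) (Ici a) x)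
    (hf' : ∀ x ∈ Ici a, f' x ≤ -c * f x) {x y : ℝ} (hx : a ≤ x) (hxy : x ≤ y) :
    f y ≤ exp (-c * (y - x)) * f x := by
  have hanti : AntitoneOn (fun t ↦ exp (c * t) * f t) (Ici a) := by
    refine antitoneOn_Ici_of_hasDerivWithinAt_nonpos
      (f' := fun t ↦ exp (c * t) * c * f t + exp (c * t) * f' t) (fun t ht ↦ ?_) (fun t ht ↦ ?_)
    · have hexp : HasDerivAt (fun s ↦ exp (c * s)) (exp (c * t) * c) t :=
        ((hasDerivAt_id t).const_mul c).exp.congr_deriv (by simp)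
      exact hexp.hasDerivWithinAt.mul (hf t ht)
    · have : exp (c * t) * (c * f t + f' t) ≤ 0 :=
        mul_nonpos_of_nonneg_of_nonpos (exp_pos _).le (by linarith [hf' t ht])
      linarith
  have hdecr := hanti hx (le_trans hx hxy) hxy
  have hsplit : exp (-c * (y - x)) * f x * exp (c * y) = exp (c * x) * f x := by
    rw [mul_right_comm, ← exp_add]
    congr 2
    ring
  rw [← mul_le_mul_iff_left₀ (exp_pos (c * y)), hsplit]
  linarith

end Ici

theorem MonotoneOn.le_of_tendsto_atTop {α β : Type*} [SemilatticeSup α] [Nonempty α]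
    [TopologicalSpace β] [Preorder β] [ClosedIciTopology β] {g : α → β} {a : α} {l : β}
    (hg : MonotoneOn g (Ici a)) (hl : Tendsto g atTop (𝓝 l)) {x : α} (hx : a ≤ x) : g x ≤ l :=
  ge_of_tendsto hl <| (eventually_ge_atTop x).mono fun _ hy ↦ hg hx (hx.trans hy) hy

theorem exponential_decay_step3 (E ρ₀ : ℝ) (hE : 0 < E)
    (fp fm fp' fm' : ℝ → ℝ)
    (hfp_nonneg : ∀ ρ, ρ₀ ≤ ρ → 0 ≤ fp ρ)
    (hfm_nonneg : ∀ ρ, ρ₀ ≤ ρ → 0 ≤ fm ρ)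
    (hfp_deriv : ∀ ρ, ρ₀ ≤ ρ → HasDerivWithinAt fp (fp' ρ) (Set.Ici ρ₀) ρ)
    (hfm_deriv : ∀ ρ, ρ₀ ≤ ρ → HasDerivWithinAt fm (fm' ρ) (Set.Ici ρ₀) ρ)
    (hlim : Filter.Tendsto (fun ρ => fp ρ + fm ρ) Filter.atTop (nhds 0))
    (h1 : ∀ ρ, ρ₀ ≤ ρ →
      (1 / 2) * fp' ρ + E * fp ρ - (E / 100) * (fp ρ + fm ρ) ≤ 0)
    (h2 : ∀ ρ, ρ₀ ≤ ρ →
      0 ≤ (1 / 2) * fm' ρ - E * fm ρ + (E / 100) * (fp ρ + fm ρ)) :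
    (∀ ρ, ρ₀ ≤ ρ → fm ρ ≤ fp ρ / 5) ∧
    (∀ ρ' ρ, ρ₀ ≤ ρ' → ρ' ≤ ρ →
      fp ρ ≤ Real.exp (-(97 / 50) * E * (ρ - ρ')) * fp ρ') := by
  have hEfp (ρ) (hρ : ρ₀ ≤ ρ) : 0 ≤ E * fp ρ := mul_nonneg hE.le (hfp_nonneg ρ hρ)
  have hEfm (ρ) (hρ : ρ₀ ≤ ρ) : 0 ≤ E * fm ρ := mul_nonneg hE.le (hfm_nonneg ρ hρ)
  have hgap_mono : MonotoneOn (fun ρ ↦ fm ρ - fp ρ / 5) (Ici ρ₀) :=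
    monotoneOn_Ici_of_hasDerivWithinAt_nonneg
      (fun ρ hρ ↦ (hfm_deriv ρ hρ).sub ((hfp_deriv ρ hρ).div_const 5))
      (fun ρ hρ ↦ by linarith [h1 ρ hρ, h2 ρ hρ, hEfp ρ hρ, hEfm ρ hρ])
  have hgap_lim : Tendsto (fun ρ ↦ fm ρ - fp ρ / 5) atTop (𝓝 0) := by
    refine squeeze_zero_norm' ((eventually_ge_atTop ρ₀).mono fun ρ hρ ↦ ?_) hlim
    rw [Real.norm_eq_abs, abs_le]
    constructor <;> linarith [hfp_nonneg ρ hρ, hfm_nonneg ρ hρ]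
  have hfm_le (ρ) (hρ : ρ₀ ≤ ρ) : fm ρ ≤ fp ρ / 5 := by
    linarith [hgap_mono.le_of_tendsto_atTop hgap_lim hρ]
  refine ⟨hfm_le, fun ρ' ρ hρ' hρ ↦ ?_⟩
  rw [show -(97 / 50) * E = -(97 / 50 * E) by ring]
  refine le_exp_mul_of_hasDerivWithinAt_le_neg_mul hfp_deriv (fun t ht ↦ ?_) hρ' hρ
  have : E * fm t ≤ E * (fp t / 5) := mul_le_mul_of_nonneg_left (hfm_le t ht) hE.le
  linarith [h1 t ht, hEfp t ht]
end

section
/- Let p, p', q, q' be integers with Δ := p·q' − p'·q ≠ 0, and let z, w ∈ ℂ∖{0,1} satisfy z^p·(1−z)^q = w^p·(1−w)^q and z^{p'}·(1−z)^{q'} = w^{p'}·(1−w)^{q'} (integer powers). Then (w/z)^Δ = 1 and ((1−w)/(1−z))^Δ = 1. Moreover, if z ≠ w, then setting η := w/z and η' := (1−w)/(1−z) one has η ≠ 1, η' ≠ 1, η ≠ η', η^p·η'^q = 1, η^{p'}·η'^{q'} = 1, and z = (1−η')/(η−η'). -/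
/-! With η = w/z and η' = (1 - w)/(1 - z) the hypotheses say η^p η'^q = η^p' η'^q' = 1;
eliminating η' (resp. η) between these two relations, as in Cramer's rule, gives
η^Δ = η'^Δ = 1. The remaining claims all follow from the affine relation
η z + η' (1 - z) = 1. -/
theorem zpow_mul_sub_mul_eq_one {G : Type*} [CommGroup G] {a b : G} {p q p' q' : ℤ}
    (h : a ^ p * b ^ q = 1) (h' : a ^ p' * b ^ q' = 1) :
    a ^ (p * q' - p' * q) = 1 ∧ b ^ (p * q' - p' * q) = 1 := by
  constructor
  · calc a ^ (p * q' - p' * q) = (a ^ p * b ^ q) ^ q' / (a ^ p' * b ^ q') ^ q := by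
          rw [mul_zpow, mul_zpow, ← zpow_mul, ← zpow_mul, ← zpow_mul, ← zpow_mul, mul_comm q q',
            mul_div_mul_right_eq_div, zpow_sub, div_eq_mul_inv]
      _ = 1 := by rw [h, h', one_zpow, one_zpow, div_one]
  · calc b ^ (p * q' - p' * q) = (a ^ p' * b ^ q') ^ p / (a ^ p * b ^ q) ^ p' := by
          rw [mul_zpow, mul_zpow, ← zpow_mul, ← zpow_mul, ← zpow_mul, ← zpow_mul, mul_comm p' p,
            mul_comm q' p, mul_comm q p', mul_div_mul_left_eq_div, zpow_sub, div_eq_mul_inv]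
      _ = 1 := by rw [h, h', one_zpow, one_zpow, div_one]

theorem zpow_mul_sub_mul_eq_one₀ {G₀ : Type*} [CommGroupWithZero G₀] {a b : G₀} {p q p' q' : ℤ}
    (ha : a ≠ 0) (hb : b ≠ 0) (h : a ^ p * b ^ q = 1) (h' : a ^ p' * b ^ q' = 1) :
    a ^ (p * q' - p' * q) = 1 ∧ b ^ (p * q' - p' * q) = 1 := by
  have := zpow_mul_sub_mul_eq_one (a := Units.mk0 a ha) (b := Units.mk0 b hb)
    (p := p) (q := q) (p' := p') (q' := q') (Units.ext (by simpa using h))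
    (Units.ext (by simpa using h'))
  simpa [Units.ext_iff] using this

theorem div_zpow_mul_div_zpow_eq_one {G₀ : Type*} [CommGroupWithZero G₀] {a b c d : G₀} {p q : ℤ}
    (hb : b ≠ 0) (hd : d ≠ 0) (h : b ^ p * d ^ q = a ^ p * c ^ q) :
    (a / b) ^ p * (c / d) ^ q = 1 := by
  rw [div_zpow, div_zpow, div_mul_div_comm, ← h,
    div_self (mul_ne_zero (zpow_ne_zero _ hb) (zpow_ne_zero _ hd))]

theorem eq_div_sub_of_mul_add_mul_one_sub {K : Type*} [Field K] {z s t : K} (hst : s ≠ t)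
    (h : s * z + t * (1 - z) = 1) : z = (1 - t) / (s - t) := by
  rw [eq_div_iff (sub_ne_zero.mpr hst)]; linear_combination h

theorem double_point_roots_of_unity_general (p p' q q' : ℤ)
    (z w : ℂ) (hz0 : z ≠ 0) (hz1 : z ≠ 1) (hw0 : w ≠ 0) (hw1 : w ≠ 1)
    (h1 : z ^ p * (1 - z) ^ q = w ^ p * (1 - w) ^ q)
    (h2 : z ^ p' * (1 - z) ^ q' = w ^ p' * (1 - w) ^ q') :
    (w / z) ^ (p * q' - p' * q) = 1 ∧
    ((1 - w) / (1 - z)) ^ (p * q' - p' * q) = 1 ∧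
    (z ≠ w →
      w / z ≠ 1 ∧ (1 - w) / (1 - z) ≠ 1 ∧ w / z ≠ (1 - w) / (1 - z) ∧
      (w / z) ^ p * ((1 - w) / (1 - z)) ^ q = 1 ∧
      (w / z) ^ p' * ((1 - w) / (1 - z)) ^ q' = 1 ∧
      z = (1 - (1 - w) / (1 - z)) / (w / z - (1 - w) / (1 - z))) := by
  have hz1' : 1 - z ≠ 0 := sub_ne_zero.mpr hz1.symm
  have hw1' : 1 - w ≠ 0 := sub_ne_zero.mpr hw1.symm
  have hη := div_zpow_mul_div_zpow_eq_one hz0 hz1' h1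
  have hη' := div_zpow_mul_div_zpow_eq_one hz0 hz1' h2
  obtain ⟨hΔη, hΔη'⟩ :=
    zpow_mul_sub_mul_eq_one₀ (div_ne_zero hw0 hz0) (div_ne_zero hw1' hz1') hη hη'
  refine ⟨hΔη, hΔη', fun hzw => ?_⟩
  have affine : w / z * z + (1 - w) / (1 - z) * (1 - z) = 1 := by
    rw [div_mul_cancel₀ _ hz0, div_mul_cancel₀ _ hz1', add_sub_cancel]
  have hη1 : w / z ≠ 1 := fun h => hzw ((div_eq_one_iff_eq hz0).mp h).symm
  have hη'1 : (1 - w) / (1 - z) ≠ 1 := fun h =>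
    hzw (sub_right_inj.mp ((div_eq_one_iff_eq hz1').mp h)).symm
  have hηη' : w / z ≠ (1 - w) / (1 - z) := fun h => hη1 (by
    rwa [← h, ← mul_add, add_sub_cancel, mul_one] at affine)
  exact ⟨hη1, hη'1, hηη', hη, hη', eq_div_sub_of_mul_add_mul_one_sub hηη' affine⟩

theorem double_point_roots_of_unity (p p' q q' : ℤ) (hΔ : p * q' - p' * q ≠ 0)
    (z w : ℂ) (hz0 : z ≠ 0) (hz1 : z ≠ 1) (hw0 : w ≠ 0) (hw1 : w ≠ 1)
    (h1 : z ^ p * (1 - z) ^ q = w ^ p * (1 - w) ^ q)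
    (h2 : z ^ p' * (1 - z) ^ q' = w ^ p' * (1 - w) ^ q') :
    (w / z) ^ (p * q' - p' * q) = 1 ∧
    ((1 - w) / (1 - z)) ^ (p * q' - p' * q) = 1 ∧
    (z ≠ w →
      w / z ≠ 1 ∧ (1 - w) / (1 - z) ≠ 1 ∧ w / z ≠ (1 - w) / (1 - z) ∧
      (w / z) ^ p * ((1 - w) / (1 - z)) ^ q = 1 ∧
      (w / z) ^ p' * ((1 - w) / (1 - z)) ^ q' = 1 ∧
      z = (1 - (1 - w) / (1 - z)) / (w / z - (1 - w) / (1 - z))) :=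
  double_point_roots_of_unity_general p p' q q' z w hz0 hz1 hw0 hw1 h1 h2
end
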